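/- arXiv:1311.3955 — 7 statements merged into one kernel-verified Lean document; each statement's English description precedes it below -/
import Mathlib

section
/- An inverse semigroup has rational word problem if and only if it is finite. -/
/-- The monoid homomorphism `(A ⊕ A)* → A* × A*` sending `inl a ↦ (a, ε)` and
`inr a ↦ (ε, a)`, used to define rational (asynchronous two-tape) relations. -/
def twoTapeHom (A : Type) : FreeMonoid (A ⊕ A) →* FreeMonoid A × FreeMonoid A :=
  FreeMonoid.lift (Sum.elim (fun a => (FreeMonoid.of a, 1)) (fun a => (1, FreeMonoid.of a)))

/-- A relation `R ⊆ A* × A*` is rational if it is the image of a regular language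
over the alphabet `A ⊕ A` under `twoTapeHom`; equivalently, it is recognised by a
two-tape asynchronous finite automaton. -/
def IsRationalRel {A : Type} (R : Set (FreeMonoid A × FreeMonoid A)) : Prop :=
  ∃ L : Language (A ⊕ A), L.IsRegular ∧
    twoTapeHom A '' {w : FreeMonoid (A ⊕ A) | w.toList ∈ L} = R

/-- The canonical embedding of the free semigroup `A⁺` into the free monoid `A*`. -/
def freeSemigroupToWord {A : Type} : FreeSemigroup A →ₙ* FreeMonoid A :=
  FreeSemigroup.lift FreeMonoid.of

/-- The two-tape word problem `ι(S,A)` of a semigroup `S` with respect to a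
(generating) map `f : A → S`: all pairs of nonempty words over `A` whose images
in `S` coincide, viewed as a relation on words in `A*`. -/
def wordProblem {A S : Type} [Semigroup S] (f : A → S) :
    Set (FreeMonoid A × FreeMonoid A) :=
  {p | ∃ w₁ w₂ : FreeSemigroup A,
        FreeSemigroup.lift f w₁ = FreeSemigroup.lift f w₂ ∧
        p = (freeSemigroupToWord w₁, freeSemigroupToWord w₂)}

/-- A semigroup has rational word problem if it is generated by some finite set `A`
(i.e. there is `f : A → S` with the induced homomorphism `A⁺ → S` surjective) for
which the two-tape word problem is a rational relation. -/
def HasRationalWordProblem (S : Type) [Semigroup S] : Prop :=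
  ∃ (A : Type) (_ : Fintype A) (f : A → S),
    Function.Surjective ⇑(FreeSemigroup.lift f) ∧ IsRationalRel (wordProblem f)

/-!
A finite semigroup has rational word problem: a finite automaton can evaluate both words in `S¹`.

Conversely, let a finite automaton read interleavings of exactly the pairs of nonempty words
with equal values. For an idempotent `e` with representing word `v`, pigeonholing along an accepted
reading of `(v ^ K, v)` at the block boundaries of the first tape gives a state `q e` that carries a
loop reading a positive power of `v` on the first tape and nothing on the second, and at which an
accepted reading of `(v ^ a ++ v ^ b, v)` can be cut. Inserting the loop of `q e` at the cut of
`q e' = q e` shows `e * e' = e'`; since idempotents of an inverse semigroup commute, `q` is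
injective, so there are only finitely many idempotents. Finally, `s` is determined by the
idempotent `s⁻¹ s`, the state and the second-tape prefix at the moment an accepted reading of
`(word of s ++ word of s⁻¹, word of s s⁻¹)` has finished the word of `s` on the first tape:
splicing the readings for `s` and `t` at such a common point gives `s t⁻¹ = t t⁻¹`, so `s = t`.
-/

def UniqueInverses (S : Type*) [Semigroup S] : Prop :=
  ∀ u : S, ∃! v : S, u * v * u = u ∧ v * u * v = v

namespace UniqueInverses

variable {S : Type*} [Semigroup S] (h : UniqueInverses S)

noncomputable def inv (u : S) : S := (h u).choose

lemma mul_inv_mul (u : S) : u * h.inv u * u = u := (h u).choose_spec.1.1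

lemma inv_mul_inv (u : S) : h.inv u * u * h.inv u = h.inv u := (h u).choose_spec.1.2

lemma eq_inv {u v : S} (h₁ : u * v * u = u) (h₂ : v * u * v = v) : v = h.inv u :=
  (h u).unique ⟨h₁, h₂⟩ (h u).choose_spec.1

lemma isIdempotentElem_mul_inv (u : S) : IsIdempotentElem (u * h.inv u) := by
  rw [IsIdempotentElem, ← mul_assoc, h.mul_inv_mul]

lemma isIdempotentElem_inv_mul (u : S) : IsIdempotentElem (h.inv u * u) := by
  rw [IsIdempotentElem, ← mul_assoc, h.inv_mul_inv]

include h in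
lemma isIdempotentElem_mul {e f : S} (he : IsIdempotentElem e) (hf : IsIdempotentElem f) :
    IsIdempotentElem (e * f) := by
  set x := h.inv (e * f)
  have hx₁ : e * f * x * (e * f) = e * f := h.mul_inv_mul _
  have hx₂ : x * (e * f) * x = x := h.inv_mul_inv _
  -- `f * x * e` is another inverse of `e * f`, so it is `x`, which makes `x` idempotent;
  -- an idempotent is its own inverse, so `e * f = x`
  have hfxe : f * x * e = x := by
    refine h.eq_inv ?_ ?_
    · calc e * f * (f * x * e) * (e * f) = e * (f * f) * x * (e * e) * f := by
            simp only [mul_assoc]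
        _ = e * f * x * (e * f) := by rw [hf.eq, he.eq]; simp only [mul_assoc]
        _ = e * f := hx₁
    · calc f * x * e * (e * f) * (f * x * e) = f * (x * ((e * e) * (f * f)) * x) * e := by
            simp only [mul_assoc]
        _ = f * x * e := by rw [he.eq, hf.eq, hx₂]
  have hxx : x * x = x := by
    calc x * x = f * x * e * (f * x * e) := by rw [hfxe]
      _ = f * (x * (e * f) * x) * e := by simp only [mul_assoc]
      _ = x := by rw [hx₂, hfxe]
  have hxxx : x * x * x = x := by rw [hxx, hxx]
  rw [IsIdempotentElem, (h.eq_inv hx₂ hx₁).trans (h.eq_inv hxxx hxxx).symm, hxx]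

include h in
lemma commute_of_isIdempotentElem {e f : S} (he : IsIdempotentElem e) (hf : IsIdempotentElem f) :
    Commute e f := by
  have hef := h.isIdempotentElem_mul he hf
  have hfe := h.isIdempotentElem_mul hf he
  have hfe_inv : f * e = h.inv (e * f) := by
    refine h.eq_inv ?_ ?_
    · calc e * f * (f * e) * (e * f) = e * (f * f) * (e * e) * f := by simp only [mul_assoc]
        _ = e * f * (e * f) := by rw [hf.eq, he.eq]; simp only [mul_assoc]
        _ = e * f := hef.eq
    · calc f * e * (e * f) * (f * e) = f * (e * e) * (f * f) * e := by simp only [mul_assoc]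
        _ = f * e * (f * e) := by rw [he.eq, hf.eq]; simp only [mul_assoc]
        _ = f * e := hfe.eq
  have hef_inv : e * f = h.inv (e * f) := h.eq_inv (by rw [hef.eq, hef.eq]) (by rw [hef.eq, hef.eq])
  exact hef_inv.trans hfe_inv.symm

lemma eq_of_inv_mul_eq_of_mul_inv_eq {s t : S} (hs : h.inv s * s = h.inv t * t)
    (hst : s * h.inv t = t * h.inv t) : s = t :=
  calc s = s * (h.inv s * s) := by rw [← mul_assoc, h.mul_inv_mul]
    _ = t := by rw [hs, ← mul_assoc, hst, h.mul_inv_mul]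

end UniqueInverses

section TwoTape

variable {A : Type}

def leftTape (u : List (A ⊕ A)) : List A := u.filterMap Sum.getLeft?

def rightTape (u : List (A ⊕ A)) : List A := u.filterMap Sum.getRight?

@[simp] lemma leftTape_nil : leftTape ([] : List (A ⊕ A)) = [] := rfl
@[simp] lemma rightTape_nil : rightTape ([] : List (A ⊕ A)) = [] := rfl
@[simp] lemma leftTape_cons_inl (a : A) (u : List (A ⊕ A)) :
    leftTape (.inl a :: u) = a :: leftTape u := rfl
@[simp] lemma leftTape_cons_inr (a : A) (u : List (A ⊕ A)) :
    leftTape (.inr a :: u) = leftTape u := rfl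
@[simp] lemma rightTape_cons_inl (a : A) (u : List (A ⊕ A)) :
    rightTape (.inl a :: u) = rightTape u := rfl
@[simp] lemma rightTape_cons_inr (a : A) (u : List (A ⊕ A)) :
    rightTape (.inr a :: u) = a :: rightTape u := rfl

@[simp] lemma leftTape_append (u v : List (A ⊕ A)) :
    leftTape (u ++ v) = leftTape u ++ leftTape v := List.filterMap_append
@[simp] lemma rightTape_append (u v : List (A ⊕ A)) :
    rightTape (u ++ v) = rightTape u ++ rightTape v := List.filterMap_append

lemma leftTape_eq_append_iff {u : List (A ⊕ A)} {x y : List A} :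
    leftTape u = x ++ y ↔ ∃ u₁ u₂, u = u₁ ++ u₂ ∧ leftTape u₁ = x ∧ leftTape u₂ = y :=
  List.filterMap_eq_append_iff

lemma exists_leftTape_rightTape (x y : List A) :
    ∃ u : List (A ⊕ A), leftTape u = x ∧ rightTape u = y :=
  ⟨x.map .inl ++ y.map .inr, by induction x <;> induction y <;> simp_all⟩

lemma twoTapeHom_ofList (u : List (A ⊕ A)) :
    twoTapeHom A (.ofList u) = (.ofList (leftTape u), .ofList (rightTape u)) := by
  induction u with
  | nil => rfl
  | cons c u ih =>
    rw [FreeMonoid.ofList_cons, map_mul, ih]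
    cases c <;> rfl

lemma ofList_mem_twoTapeHom_image_iff (L : Language (A ⊕ A)) (x y : List A) :
    (FreeMonoid.ofList x, FreeMonoid.ofList y) ∈ twoTapeHom A '' {w | w.toList ∈ L} ↔
      ∃ u ∈ L, leftTape u = x ∧ rightTape u = y := by
  simp only [Set.mem_image, Set.mem_ofPred_eq, FreeMonoid.ofList.surjective.exists,
    FreeMonoid.toList_ofList, twoTapeHom_ofList, Prod.mk.injEq, EmbeddingLike.apply_eq_iff_eq]

end TwoTape

section WordValue

variable {A S : Type} [Semigroup S]

def wordValue (f : A → S) (l : List A) : WithOne S := (l.map fun a => (f a : WithOne S)).prod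

@[simp] lemma wordValue_nil (f : A → S) : wordValue f [] = 1 := rfl

@[simp] lemma wordValue_cons (f : A → S) (a : A) (l : List A) :
    wordValue f (a :: l) = f a * wordValue f l := List.prod_cons

@[simp] lemma wordValue_append (f : A → S) (l₁ l₂ : List A) :
    wordValue f (l₁ ++ l₂) = wordValue f l₁ * wordValue f l₂ := by
  simp [wordValue]

lemma wordValue_flatten_replicate (f : A → S) (n : ℕ) (l : List A) :
    wordValue f (List.replicate n l).flatten = wordValue f l ^ n := by
  induction n with
  | zero => rfl
  | succ n ih => rw [List.replicate_succ, List.flatten_cons, wordValue_append, ih, pow_succ']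

lemma wordValue_cons_eq_coe (f : A → S) (a : A) (l : List A) :
    ∃ s : S, wordValue f (a :: l) = s := by
  induction l generalizing a with
  | nil => exact ⟨f a, mul_one _⟩
  | cons b l ih =>
    obtain ⟨s, hs⟩ := ih b
    exact ⟨f a * s, by rw [wordValue_cons, hs, WithOne.coe_mul]⟩

lemma wordValue_eq_one_iff (f : A → S) {l : List A} : wordValue f l = 1 ↔ l = [] := by
  refine ⟨fun hl => ?_, fun hl => hl ▸ rfl⟩
  cases l with
  | nil => rfl
  | cons a l =>
    obtain ⟨s, hs⟩ := wordValue_cons_eq_coe f a l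
    exact absurd (hs ▸ hl) WithOne.coe_ne_one

lemma toList_freeSemigroupToWord (w : FreeSemigroup A) :
    (freeSemigroupToWord w).toList = w.head :: w.tail := by
  induction w using FreeSemigroup.recOnMul with
  | ih1 a => rfl
  | ih2 a w _ ih => rw [map_mul, FreeMonoid.toList_mul, ih]; rfl

lemma wordValue_freeSemigroupToWord (f : A → S) (w : FreeSemigroup A) :
    wordValue f (freeSemigroupToWord w).toList = FreeSemigroup.lift f w := by
  induction w using FreeSemigroup.recOnMul with
  | ih1 a => exact mul_one _
  | ih2 a w _ ih => rw [map_mul, FreeMonoid.toList_mul, wordValue_append, ih, map_mul]; rfl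

lemma ofList_mem_wordProblem_iff (f : A → S) (x y : List A) :
    (FreeMonoid.ofList x, FreeMonoid.ofList y) ∈ wordProblem f ↔
      x ≠ [] ∧ y ≠ [] ∧ wordValue f x = wordValue f y := by
  constructor
  · rintro ⟨w₁, w₂, hw, hxy⟩
    obtain ⟨hx, hy⟩ := Prod.mk.inj hxy
    rw [← FreeMonoid.toList_ofList x, ← FreeMonoid.toList_ofList y, hx, hy,
      wordValue_freeSemigroupToWord, wordValue_freeSemigroupToWord, hw,
      toList_freeSemigroupToWord, toList_freeSemigroupToWord]
    exact ⟨List.cons_ne_nil _ _, List.cons_ne_nil _ _, rfl⟩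
  · rintro ⟨hx, hy, hxy⟩
    obtain ⟨a, x, rfl⟩ := List.exists_cons_of_ne_nil hx
    obtain ⟨b, y, rfl⟩ := List.exists_cons_of_ne_nil hy
    have hword (c : A) (l : List A) : freeSemigroupToWord ⟨c, l⟩ = .ofList (c :: l) :=
      FreeMonoid.toList.injective (toList_freeSemigroupToWord _)
    refine ⟨⟨a, x⟩, ⟨b, y⟩, WithOne.coe_inj.mp ?_, by rw [hword, hword]⟩
    rwa [← wordValue_freeSemigroupToWord, ← wordValue_freeSemigroupToWord, hword, hword,
      FreeMonoid.toList_ofList, FreeMonoid.toList_ofList]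

lemma exists_wordValue_eq_of_surjective {f : A → S}
    (hf : Function.Surjective (FreeSemigroup.lift f)) (s : S) : ∃ v ≠ [], wordValue f v = s := by
  obtain ⟨w, rfl⟩ := hf s
  refine ⟨_, ?_, wordValue_freeSemigroupToWord f w⟩
  rw [toList_freeSemigroupToWord]
  exact List.cons_ne_nil _ _

end WordValue

section Recognition

variable {A S : Type} [Semigroup S]

def AcceptsWordProblem (L : Language (A ⊕ A)) (f : A → S) : Prop :=
  ∀ x y : List A, (∃ u ∈ L, leftTape u = x ∧ rightTape u = y) ↔
    x ≠ [] ∧ y ≠ [] ∧ wordValue f x = wordValue f y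

lemma isRationalRel_wordProblem_iff (f : A → S) :
    IsRationalRel (wordProblem f) ↔
      ∃ L : Language (A ⊕ A), L.IsRegular ∧ AcceptsWordProblem L f := by
  refine exists_congr fun L => and_congr_right fun _ => ?_
  simp only [Set.ext_iff, Prod.forall, FreeMonoid.ofList.surjective.forall,
    ofList_mem_twoTapeHom_image_iff, ofList_mem_wordProblem_iff, AcceptsWordProblem]

variable {f : A → S} {L : Language (A ⊕ A)}

lemma AcceptsWordProblem.wordValue_eq (hL : AcceptsWordProblem L f) {u : List (A ⊕ A)}
    (hu : u ∈ L) : wordValue f (leftTape u) = wordValue f (rightTape u) :=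
  ((hL _ _).mp ⟨u, hu, rfl, rfl⟩).2.2

lemma AcceptsWordProblem.exists_mem (hL : AcceptsWordProblem L f) {x y : List A} (hx : x ≠ [])
    (hy : y ≠ []) (hxy : wordValue f x = wordValue f y) :
    ∃ u ∈ L, leftTape u = x ∧ rightTape u = y :=
  (hL x y).mpr ⟨hx, hy, hxy⟩

end Recognition

section FiniteSemigroup

variable (S : Type) [Semigroup S]

def valueDFA : DFA (S ⊕ S) (WithOne S × WithOne S) where
  step p := Sum.elim (fun a => (p.1 * a, p.2)) (fun a => (p.1, p.2 * a))
  start := (1, 1)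
  accept := {p | p.1 = p.2 ∧ p.1 ≠ 1}

lemma valueDFA_evalFrom (p : WithOne S × WithOne S) (u : List (S ⊕ S)) :
    (valueDFA S).evalFrom p u =
      (p.1 * wordValue id (leftTape u), p.2 * wordValue id (rightTape u)) := by
  induction u generalizing p with
  | nil => simp
  | cons c u ih => cases c <;> rw [DFA.evalFrom_cons, ih] <;> simp [valueDFA, mul_assoc]

lemma mem_accepts_valueDFA {u : List (S ⊕ S)} : u ∈ (valueDFA S).accepts ↔
    wordValue id (leftTape u) = wordValue id (rightTape u) ∧ leftTape u ≠ [] := by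
  rw [DFA.mem_accepts, DFA.eval, valueDFA_evalFrom]
  simp [valueDFA, wordValue_eq_one_iff]

lemma acceptsWordProblem_valueDFA : AcceptsWordProblem (valueDFA S).accepts id := by
  intro x y
  constructor
  · rintro ⟨u, hu, rfl, rfl⟩
    obtain ⟨hval, hne⟩ := (mem_accepts_valueDFA S).mp hu
    refine ⟨hne, fun hnil => hne ?_, hval⟩
    rw [← wordValue_eq_one_iff id, hval, hnil, wordValue_nil]
  · rintro ⟨hx, -, hxy⟩
    obtain ⟨u, rfl, rfl⟩ := exists_leftTape_rightTape x y
    exact ⟨u, (mem_accepts_valueDFA S).mpr ⟨hxy, hx⟩, rfl, rfl⟩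

theorem hasRationalWordProblem_of_finite [Finite S] : HasRationalWordProblem S := by
  have := Fintype.ofFinite S
  let : Fintype (WithOne S) := inferInstanceAs (Fintype (Option S))
  refine ⟨S, inferInstance, id, fun s => ⟨.of s, rfl⟩, ?_⟩
  exact (isRationalRel_wordProblem_iff id).mpr
    ⟨_, ⟨_, inferInstance, valueDFA S, rfl⟩, acceptsWordProblem_valueDFA S⟩

end FiniteSemigroup

section Pumping

variable {A S σ : Type} [Semigroup S] (M : DFA (A ⊕ A) σ) (f : A → S)

lemma exists_rightTape_silent_loop [Fintype σ] {ι : Type} [Fintype ι] {u : List (A ⊕ A)}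
    (p : ι → List (A ⊕ A)) (hp : ∀ i, p i <+: u)
    (hcard : Fintype.card σ * ((rightTape u).length + 1) < Fintype.card ι) :
    ∃ i j, i ≠ j ∧ ∃ w, p i ++ w = p j ∧ rightTape w = [] ∧
      M.evalFrom (M.eval (p i)) w = M.eval (p i) := by
  have hlen (i : ι) : (rightTape (p i)).length < (rightTape u).length + 1 :=
    Nat.lt_succ_of_le ((hp i).filterMap _).length_le
  obtain ⟨i, j, hij, hsame⟩ := Fintype.exists_ne_map_eq_of_card_lt
    (fun i => (M.eval (p i), (⟨_, hlen i⟩ : Fin ((rightTape u).length + 1))))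
    (by rwa [Fintype.card_prod, Fintype.card_fin])
  obtain ⟨hstate, hlength⟩ := Prod.mk.inj hsame
  wlog hij_prefix : p i <+: p j generalizing i j
  · exact this j i hij.symm hsame.symm hstate.symm hlength.symm
      ((List.prefix_or_prefix_of_prefix (hp i) (hp j)).resolve_left hij_prefix)
  obtain ⟨w, hw⟩ := hij_prefix
  refine ⟨i, j, hij, w, hw, ?_, ?_⟩
  · have := congrArg (fun l => (rightTape l).length) hw
    simp only [rightTape_append, List.length_append] at this
    exact List.length_eq_zero_iff.mp (by simp only [Fin.mk.injEq] at hlength; omega)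
  · rw [DFA.eval, ← DFA.evalFrom_of_append, hw]
    exact hstate.symm

def loopStates (x : WithOne S) : Set σ :=
  {q | ∃ w, M.evalFrom q w = q ∧ rightTape w = [] ∧ wordValue f (leftTape w) = x}

def cutStates (y : WithOne S) : Set σ :=
  {q | ∃ (u₁ u₂ : List (A ⊕ A)) (n : ℕ), u₁ ++ u₂ ∈ M.accepts ∧ M.eval u₁ = q ∧
    wordValue f (leftTape u₁) = y ^ n ∧ wordValue f (leftTape (u₁ ++ u₂)) = y}

variable {M f}

lemma AcceptsWordProblem.mul_eq_of_mem_loopStates_of_mem_cutStates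
    (hL : AcceptsWordProblem M.accepts f) {x y : WithOne S} (hxy : Commute x y) {q : σ}
    (hx : q ∈ loopStates M f x) (hy : q ∈ cutStates M f y) : x * y = y := by
  obtain ⟨w, hloop, hw, rfl⟩ := hx
  obtain ⟨u₁, u₂, n, hu, rfl, hu₁, hu₁₂⟩ := hy
  have hacc : u₁ ++ (w ++ u₂) ∈ M.accepts := by
    rwa [DFA.mem_accepts, DFA.eval, DFA.evalFrom_of_append, DFA.evalFrom_of_append, ← DFA.eval,
      hloop, DFA.eval, ← DFA.evalFrom_of_append]
  calc wordValue f (leftTape w) * y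
      = wordValue f (leftTape w) * (y ^ n * wordValue f (leftTape u₂)) := by
        rw [← hu₁, ← wordValue_append, ← leftTape_append, hu₁₂]
    _ = y ^ n * wordValue f (leftTape w) * wordValue f (leftTape u₂) := by
        rw [← mul_assoc, (hxy.pow_right n).eq]
    _ = wordValue f (rightTape (u₁ ++ (w ++ u₂))) := by
        rw [← hL.wordValue_eq hacc]; simp only [leftTape_append, wordValue_append, hu₁, mul_assoc]
    _ = y := by
        rw [← hu₁₂, hL.wordValue_eq hu]; simp [hw]

lemma AcceptsWordProblem.nonempty_loopStates_inter_cutStates [Fintype σ]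
    (hL : AcceptsWordProblem M.accepts f) {e : S} (he : IsIdempotentElem e) {v : List A}
    (hv : v ≠ []) (hve : wordValue f v = e) :
    (loopStates M f e ∩ cutStates M f e).Nonempty := by
  have he' : IsIdempotentElem (e : WithOne S) := he.map WithOne.coeMulHom
  have hvpow (n : ℕ) : wordValue f (List.replicate n v).flatten = (e : WithOne S) ^ n := by
    rw [wordValue_flatten_replicate, hve]
  have : Nonempty σ := ⟨M.start⟩
  set K := Fintype.card σ * (v.length + 1)
  have hK : K ≠ 0 := Nat.mul_ne_zero Fintype.card_ne_zero (Nat.succ_ne_zero _)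
  obtain ⟨u, hu, hux, huv⟩ := hL.exists_mem (x := (List.replicate K v).flatten) (by simp [hK, hv])
    hv (by rw [hvpow, he'.pow_eq hK, hve])
  have hsplit (i : Fin (K + 1)) : ∃ p s, u = p ++ s ∧ leftTape p = (List.replicate i v).flatten ∧
      leftTape s = (List.replicate (K - i) v).flatten :=
    leftTape_eq_append_iff.mp (by
      rw [hux, ← List.flatten_append, ← List.replicate_add, Nat.add_sub_cancel' i.is_le])
  choose p s hps hp _ using hsplit
  obtain ⟨i, j, hij, w, hw, hwr, hloop⟩ := exists_rightTape_silent_loop M p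
    (fun i => hps i ▸ List.prefix_append _ _) (by rw [huv, Fintype.card_fin]; omega)
  obtain ⟨d, hd, hwl⟩ : ∃ d ≠ 0, leftTape w = (List.replicate d v).flatten := by
    have hwl := congrArg leftTape hw
    rw [leftTape_append, hp, hp] at hwl
    have hij_le : (i : ℕ) ≤ j := by
      have hlen := congrArg List.length hwl
      simp only [List.length_append, List.length_flatten, List.map_replicate, List.sum_replicate,
        smul_eq_mul] at hlen
      exact Nat.le_of_mul_le_mul_right (by omega) (List.length_pos_iff.mpr hv)
    obtain ⟨d, hd⟩ := Nat.exists_eq_add_of_le hij_le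
    refine ⟨d, fun h0 => hij (Fin.ext (by omega)), ?_⟩
    rw [hd, List.replicate_add, List.flatten_append] at hwl
    exact List.append_cancel_left hwl
  refine ⟨M.eval (p i), ⟨w, hloop, hwr, by rw [hwl, hvpow, he'.pow_eq hd]⟩,
    p i, s i, i, hps i ▸ hu, rfl, by rw [hp, hvpow], ?_⟩
  rw [← hps, hux, hvpow, he'.pow_eq hK]

end Pumping

section Finiteness

variable {A S σ : Type} [Semigroup S] [Fintype σ] {M : DFA (A ⊕ A) σ} {f : A → S}

lemma AcceptsWordProblem.finite_setOf_isIdempotentElem (hinv : UniqueInverses S)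
    (hL : AcceptsWordProblem M.accepts f) (hgen : ∀ s : S, ∃ v ≠ [], wordValue f v = s) :
    {e : S | IsIdempotentElem e}.Finite := by
  have hq (e : {e : S // IsIdempotentElem e}) :
      ∃ q, q ∈ loopStates M f e ∧ q ∈ cutStates M f e := by
    obtain ⟨v, hv, hve⟩ := hgen e
    exact hL.nonempty_loopStates_inter_cutStates e.2 hv hve
  choose q hql hqc using hq
  have hcomm (e₁ e₂ : {e : S // IsIdempotentElem e}) : Commute (e₁ : WithOne S) e₂ :=
    (hinv.commute_of_isIdempotentElem e₁.2 e₂.2).map WithOne.coeMulHom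
  have hinj : Function.Injective q := by
    intro e₁ e₂ h
    have h₁₂ := hL.mul_eq_of_mem_loopStates_of_mem_cutStates (hcomm e₁ e₂) (hql e₁)
      (by rw [h]; exact hqc e₂)
    have h₂₁ := hL.mul_eq_of_mem_loopStates_of_mem_cutStates (hcomm e₂ e₁) (hql e₂)
      (by rw [← h]; exact hqc e₁)
    exact Subtype.ext (WithOne.coe_injective (h₂₁.symm.trans ((hcomm e₂ e₁).eq.trans h₁₂)))
  exact Set.finite_coe_iff.mp (Finite.of_injective q hinj)

lemma AcceptsWordProblem.finite (hinv : UniqueInverses S) (hL : AcceptsWordProblem M.accepts f)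
    (hgen : ∀ s : S, ∃ v ≠ [], wordValue f v = s) : Finite S := by
  have hE := hL.finite_setOf_isIdempotentElem hinv hgen
  choose V hVne hVval using hgen
  have hsplit (s : S) : ∃ p t, p ++ t ∈ M.accepts ∧ leftTape p = V s ∧
      leftTape t = V (hinv.inv s) ∧ rightTape (p ++ t) = V (s * hinv.inv s) := by
    obtain ⟨u, hu, hul, hur⟩ := hL.exists_mem (x := V s ++ V (hinv.inv s))
      (y := V (s * hinv.inv s)) (by simp [hVne]) (hVne _)
      (by rw [wordValue_append, hVval, hVval, hVval, WithOne.coe_mul])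
    obtain ⟨p, t, rfl, hp, ht⟩ := leftTape_eq_append_iff.mp hul
    exact ⟨p, t, hu, hp, ht, hur⟩
  choose p t hacc hp ht hr using hsplit
  let key (s : S) : S × σ × List A := (hinv.inv s * s, M.eval (p s), rightTape (p s))
  have hinj : Function.Injective key := by
    intro s s' h
    obtain ⟨h₁, h₂⟩ := Prod.mk.inj h
    obtain ⟨h₂, h₃⟩ := Prod.mk.inj h₂
    have hsplice : p s ++ t s' ∈ M.accepts := by
      rw [DFA.mem_accepts, DFA.eval, DFA.evalFrom_of_append, ← DFA.eval, h₂, DFA.eval,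
        ← DFA.evalFrom_of_append]
      exact hacc s'
    have hval := hL.wordValue_eq hsplice
    rw [leftTape_append, rightTape_append, hp, ht, h₃, ← rightTape_append, hr, wordValue_append,
      hVval, hVval, hVval, ← WithOne.coe_mul] at hval
    exact hinv.eq_of_inv_mul_eq_of_mul_inv_eq h₁ (WithOne.coe_injective hval)
  have hprefixes (l : List A) : {l' | l' <+: l}.Finite :=
    (List.finite_toSet l.inits).subset fun l' hl' => (List.mem_inits _ _).mpr hl'
  have hrange : Set.range key ⊆
      {e | IsIdempotentElem e} ×ˢ
        (Set.univ ×ˢ ⋃ e ∈ {e : S | IsIdempotentElem e}, {l | l <+: V e}) := by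
    rintro _ ⟨s, rfl⟩
    refine ⟨hinv.isIdempotentElem_inv_mul s, trivial,
      Set.mem_biUnion (hinv.isIdempotentElem_mul_inv s) ?_⟩
    rw [Set.mem_ofPred_eq, ← hr]
    exact List.IsPrefix.filterMap _ (List.prefix_append _ _)
  have : Finite (Set.range key) :=
    (hE.prod (Set.finite_univ.prod (hE.biUnion fun e _ => hprefixes (V e)))).subset hrange
  exact Finite.of_injective_finite_range hinj

end Finiteness

/-- **Anisimov's theorem for inverse semigroups.**
An inverse semigroup (a semigroup in which every element has a unique inverse)
has rational word problem if and only if it is finite. -/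
theorem inverse_semigroup_hasRationalWordProblem_iff_finite (S : Type) [Semigroup S]
    (hinv : ∀ u : S, ∃! v : S, u * v * u = u ∧ v * u * v = v) :
    HasRationalWordProblem S ↔ Finite S := by
  refine ⟨fun ⟨A, _, f, hf, hrat⟩ => ?_, fun _ => hasRationalWordProblem_of_finite S⟩
  obtain ⟨_, ⟨σ, _, M, rfl⟩, hL⟩ := (isRationalRel_wordProblem_iff f).mp hrat
  exact hL.finite hinv (exists_wordValue_eq_of_surjective hf)
end

section
/- The free monogenic inverse semigroup does not have rational word problem; concretely, the word problem of Preston's model F with respect to the generating set {u, u⁻¹} = {(0,1,1), (-1,0,-1)} is not a rational relation. -/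
/-- Membership in Preston's model `F` of the free monogenic inverse semigroup:
triples `(-l, n, m)` with `l, n ∈ ℕ`, `m ∈ ℤ`, `0 < n + l` and `-l ≤ m ≤ n`. -/
def InF (p : ℤ × ℤ × ℤ) : Prop :=
  p.1 ≤ 0 ∧ 0 ≤ p.2.1 ∧ p.1 < p.2.1 ∧ p.1 ≤ p.2.2 ∧ p.2.2 ≤ p.2.1

/-- The multiplication of Preston's model `F`:
`(-l, n, m)·(-l', n', m') = ((-l) ∧ (m - l'), n ∨ (m + n'), m + m')`, where the
first coordinate is the meet (min) and the second the join (max). -/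
def pmul (p q : ℤ × ℤ × ℤ) : ℤ × ℤ × ℤ :=
  (min p.1 (p.2.2 + q.1), max p.2.1 (p.2.2 + q.2.1), p.2.2 + q.2.2)

/-- Preston's model of the free monogenic inverse semigroup. -/
def PrestonF : Type := {p : ℤ × ℤ × ℤ // InF p}

instance : Mul PrestonF :=
  ⟨fun x y => ⟨pmul x.1 y.1, by
    obtain ⟨⟨a, b, c⟩, h⟩ := x
    obtain ⟨⟨a', b', c'⟩, h'⟩ := y
    simp [InF, pmul] at h h' ⊢
    omega⟩⟩

instance : Semigroup PrestonF where
  mul_assoc x y z := by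
    apply Subtype.ext
    show pmul (pmul x.1 y.1) z.1 = pmul x.1 (pmul y.1 z.1)
    obtain ⟨⟨a, b, c⟩, h⟩ := x
    obtain ⟨⟨a', b', c'⟩, h'⟩ := y
    obtain ⟨⟨a'', b'', c''⟩, h''⟩ := z
    simp only [pmul, Prod.mk.injEq]
    omega

/-- The generator `u = (0, 1, 1)` of Preston's model `F`. -/
def uF : PrestonF := ⟨(0, 1, 1), by norm_num [InF]⟩

/-- The inverse `u⁻¹ = (-1, 0, -1)` of the generator of Preston's model `F`. -/
def vF : PrestonF := ⟨(-1, 0, -1), by norm_num [InF]⟩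

-- ===== aux =====
namespace PrestonAux

abbrev fgen : Bool → PrestonF := fun b : Bool => if b then uF else vF

@[simp] lemma mul_fst (x y : PrestonF) : (x * y).1 = pmul x.1 y.1 := rfl

def Ssum : FreeMonoid Bool →* Multiplicative ℤ :=
  FreeMonoid.lift (fun b => Multiplicative.ofAdd (if b then 1 else -1))

def Thom : PrestonF →ₙ* Multiplicative ℤ where
  toFun p := Multiplicative.ofAdd p.1.2.2
  map_mul' x y := by
    show Multiplicative.ofAdd (pmul x.1 y.1).2.2 = _
    simp [pmul, ofAdd_add]

lemma Thom_lift (w : FreeSemigroup Bool) :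
    Thom (FreeSemigroup.lift fgen w) = Ssum (freeSemigroupToWord w) := by
  induction w using FreeSemigroup.recOnMul with
  | ih1 b => cases b <;> rfl
  | ih2 x y hx hy => simp only [map_mul, hx, hy]

def g (a : Bool) : List Bool → FreeSemigroup Bool
  | [] => FreeSemigroup.of a
  | x :: xs => FreeSemigroup.of a * g x xs

lemma word_g (a : Bool) (l : List Bool) :
    freeSemigroupToWord (g a l) = FreeMonoid.ofList (a :: l) := by
  induction l generalizing a with
  | nil => rfl
  | cons x xs ih =>
    show freeSemigroupToWord (FreeSemigroup.of a * g x xs) = _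
    rw [map_mul, ih]
    rfl

lemma g_append (a : Bool) (l : List Bool) (b : Bool) (l' : List Bool) :
    g a (l ++ b :: l') = g a l * g b l' := by
  induction l generalizing a with
  | nil => rfl
  | cons x xs ih =>
    show FreeSemigroup.of a * g x (xs ++ b :: l') = _
    rw [ih, ← mul_assoc]
    rfl

lemma lift_g_true (m : ℕ) :
    (FreeSemigroup.lift fgen (g true (List.replicate m true))).1 = (0, (m : ℤ) + 1, (m : ℤ) + 1) := by
  induction m with
  | zero => rfl
  | succ n ih =>
    rw [List.replicate_succ]
    show (FreeSemigroup.lift fgen (FreeSemigroup.of true * g true (List.replicate n true))).1 = _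
    rw [map_mul, mul_fst, ih]
    show pmul (0,1,1) _ = _
    simp only [pmul, Prod.mk.injEq]
    push_cast
    refine ⟨by omega, by omega, by omega⟩

lemma lift_g_false (m : ℕ) :
    (FreeSemigroup.lift fgen (g false (List.replicate m false))).1 = (-((m : ℤ) + 1), 0, -((m : ℤ) + 1)) := by
  induction m with
  | zero => rfl
  | succ n ih =>
    rw [List.replicate_succ]
    show (FreeSemigroup.lift fgen (FreeSemigroup.of false * g false (List.replicate n false))).1 = _
    rw [map_mul, mul_fst, ih]
    show pmul (-1,0,-1) _ = _
    simp only [pmul, Prod.mk.injEq]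
    push_cast
    refine ⟨by omega, by omega, by omega⟩


def w1 (K : ℕ) : FreeSemigroup Bool :=
  g true (List.replicate K true ++ false ::
    (List.replicate (2*K+1) false ++ true :: List.replicate K true))

def w2 (K : ℕ) : FreeSemigroup Bool :=
  g false (List.replicate K false ++ true ::
    (List.replicate (2*K+1) true ++ false :: List.replicate K false))

lemma lift_w1 (K : ℕ) :
    (FreeSemigroup.lift fgen (w1 K)).1 = (-((K:ℤ)+1), (K:ℤ)+1, 0) := by
  rw [w1, g_append, g_append, map_mul, map_mul, mul_fst, mul_fst, lift_g_true]
  have : (FreeSemigroup.lift fgen (g false (List.replicate (2*K+1) false))).1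
      = (-((2*K+1 : ℕ) + 1 : ℤ), 0, -((2*K+1 : ℕ) + 1 : ℤ)) := lift_g_false _
  rw [this]
  simp only [pmul, Prod.mk.injEq]
  push_cast
  refine ⟨by omega, by omega, by omega⟩

lemma lift_w2 (K : ℕ) :
    (FreeSemigroup.lift fgen (w2 K)).1 = (-((K:ℤ)+1), (K:ℤ)+1, 0) := by
  rw [w2, g_append, g_append, map_mul, map_mul, mul_fst, mul_fst, lift_g_false]
  have : (FreeSemigroup.lift fgen (g true (List.replicate (2*K+1) true))).1
      = ((0 : ℤ), ((2*K+1 : ℕ) + 1 : ℤ), ((2*K+1 : ℕ) + 1 : ℤ)) := lift_g_true _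
  rw [this]
  simp only [pmul, Prod.mk.injEq]
  push_cast
  refine ⟨by omega, by omega, by omega⟩

lemma word_w1 (K : ℕ) :
    freeSemigroupToWord (w1 K) = FreeMonoid.ofList
      (List.replicate (K+1) true ++ List.replicate (2*K+2) false ++ List.replicate (K+1) true) := by
  rw [w1, word_g]
  congr 1
  simp [List.replicate_succ, List.append_assoc]

lemma word_w2 (K : ℕ) :
    freeSemigroupToWord (w2 K) = FreeMonoid.ofList
      (List.replicate (K+1) false ++ List.replicate (2*K+2) true ++ List.replicate (K+1) false) := by
  rw [w2, word_g]
  congr 1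
  simp [List.replicate_succ, List.append_assoc]

lemma tape_len (l : List (Bool ⊕ Bool)) :
    ((twoTapeHom Bool (FreeMonoid.ofList l)).1).toList.length
      + ((twoTapeHom Bool (FreeMonoid.ofList l)).2).toList.length = l.length := by
  induction l with
  | nil => rfl
  | cons x xs ih =>
    rw [FreeMonoid.ofList_cons, map_mul]
    cases x with
    | inl a =>
      have h1 : twoTapeHom Bool (FreeMonoid.of (Sum.inl a)) = (FreeMonoid.of a, 1) := rfl
      rw [h1]
      simp only [Prod.fst_mul, Prod.snd_mul, FreeMonoid.toList_mul, List.length_append,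
        List.length_cons] at *
      simpa using by omega
    | inr a =>
      have h1 : twoTapeHom Bool (FreeMonoid.of (Sum.inr a)) = (1, FreeMonoid.of a) := rfl
      rw [h1]
      simp only [Prod.fst_mul, Prod.snd_mul, FreeMonoid.toList_mul, List.length_append,
        List.length_cons] at *
      simpa using by omega

lemma Ssum_replicate_true (m : ℕ) :
    Ssum (FreeMonoid.ofList (List.replicate m true)) = Multiplicative.ofAdd (m : ℤ) := by
  rw [Ssum, FreeMonoid.lift_ofList]
  simp only [List.map_replicate, if_pos, List.prod_replicate, ← ofAdd_nsmul]
  norm_num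

lemma Ssum_replicate_false (m : ℕ) :
    Ssum (FreeMonoid.ofList (List.replicate m false)) = Multiplicative.ofAdd (-(m : ℤ)) := by
  rw [Ssum, FreeMonoid.lift_ofList]
  simp only [List.map_replicate, if_neg, List.prod_replicate, ← ofAdd_nsmul]
  norm_num

lemma prefix_replicate {α : Type} {p R' R : List α} {x : α} {k : ℕ}
    (h : p ++ R' = List.replicate k x ++ R) (hp : p.length ≤ k) :
    p = List.replicate p.length x := by
  have h1 : p = (List.replicate k x ++ R).take p.length := by
    rw [← h, List.take_left]
  conv_lhs => rw [h1]
  rw [List.take_append, List.take_replicate,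
    List.length_replicate, Nat.sub_eq_zero_of_le hp, List.take_zero, List.append_nil,
    min_eq_left hp]


lemma sum_eq {p : FreeMonoid Bool × FreeMonoid Bool} (hp : p ∈ wordProblem fgen) :
    Ssum p.1 = Ssum p.2 := by
  obtain ⟨wa, wb, h, hp2⟩ := hp
  rw [hp2]
  show Ssum (freeSemigroupToWord wa) = Ssum (freeSemigroupToWord wb)
  rw [← Thom_lift, ← Thom_lift, h]

theorem main : ¬ IsRationalRel (wordProblem fgen) := by
  rintro ⟨L, ⟨σ, _, M, hM⟩, himg⟩
  set K := Fintype.card σ with hK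
  -- the base pair
  have hmem : (freeSemigroupToWord (w1 K), freeSemigroupToWord (w2 K)) ∈ wordProblem fgen :=
    ⟨w1 K, w2 K, Subtype.ext (by rw [lift_w1, lift_w2]), rfl⟩
  have hmem' : (freeSemigroupToWord (w1 K), freeSemigroupToWord (w2 K))
      ∈ twoTapeHom Bool '' {w : FreeMonoid (Bool ⊕ Bool) | w.toList ∈ L} := by
    rw [himg]; exact hmem
  obtain ⟨w, hwL, hw⟩ := hmem'
  -- length of witness
  have htl := tape_len w.toList
  rw [FreeMonoid.ofList_toList, hw] at htl
  have hXlen : (freeSemigroupToWord (w1 K)).toList.length = 4*K+4 := by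
    rw [word_w1]; simp [FreeMonoid.toList_ofList]; omega
  have hwlen : K ≤ w.toList.length := by
    simp only at htl
    omega
  -- pumping
  have hacc : w.toList ∈ M.accepts := by rw [hM]; exact hwL
  obtain ⟨a, b, c, hsplit, hab, hbne, hpump⟩ := M.pumping_lemma hacc hwlen
  have hwABC : w = FreeMonoid.ofList a * FreeMonoid.ofList b * FreeMonoid.ofList c := by
    rw [← FreeMonoid.ofList_append, ← FreeMonoid.ofList_append, ← hsplit,
      FreeMonoid.ofList_toList]
  -- tape components
  have hwfst : (twoTapeHom Bool (FreeMonoid.ofList a)).1 * (twoTapeHom Bool (FreeMonoid.ofList b)).1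
      * (twoTapeHom Bool (FreeMonoid.ofList c)).1 = freeSemigroupToWord (w1 K) := by
    have h := congrArg Prod.fst hw
    rw [hwABC, map_mul, map_mul] at h
    simpa only [Prod.fst_mul] using h
  have hwsnd : (twoTapeHom Bool (FreeMonoid.ofList a)).2 * (twoTapeHom Bool (FreeMonoid.ofList b)).2
      * (twoTapeHom Bool (FreeMonoid.ofList c)).2 = freeSemigroupToWord (w2 K) := by
    have h := congrArg Prod.snd hw
    rw [hwABC, map_mul, map_mul] at h
    simpa only [Prod.snd_mul] using h
  set x₁ := (twoTapeHom Bool (FreeMonoid.ofList a)).1 with hx₁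
  set y₁ := (twoTapeHom Bool (FreeMonoid.ofList a)).2 with hy₁
  set s := (twoTapeHom Bool (FreeMonoid.ofList b)).1 with hsdef
  set t := (twoTapeHom Bool (FreeMonoid.ofList b)).2 with htdef
  set x₂ := (twoTapeHom Bool (FreeMonoid.ofList c)).1 with hx₂
  set y₂ := (twoTapeHom Bool (FreeMonoid.ofList c)).2 with hy₂
  have hlen_a := tape_len a
  have hlen_b := tape_len b
  rw [← hx₁, ← hy₁] at hlen_a
  rw [← hsdef, ← htdef] at hlen_b
  -- the prefix x₁ ++ s of X consists of `true`s only
  have hXl : (x₁.toList ++ s.toList) ++ x₂.toList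
      = List.replicate (K+1) true
        ++ (List.replicate (2*K+2) false ++ List.replicate (K+1) true) := by
    have h := congrArg FreeMonoid.toList hwfst
    rw [word_w1] at h
    simpa [FreeMonoid.toList_mul, FreeMonoid.toList_ofList, List.append_assoc] using h
  have hYl : (y₁.toList ++ t.toList) ++ y₂.toList
      = List.replicate (K+1) false
        ++ (List.replicate (2*K+2) true ++ List.replicate (K+1) false) := by
    have h := congrArg FreeMonoid.toList hwsnd
    rw [word_w2] at h
    simpa [FreeMonoid.toList_mul, FreeMonoid.toList_ofList, List.append_assoc] using h
  have hps : x₁.toList ++ s.toList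
      = List.replicate (x₁.toList ++ s.toList).length true :=
    prefix_replicate hXl (by simp only [List.length_append]; omega)
  have hpt : y₁.toList ++ t.toList
      = List.replicate (y₁.toList ++ t.toList).length false :=
    prefix_replicate hYl (by simp only [List.length_append]; omega)
  have hsl : s.toList = List.replicate s.toList.length true := by
    have h := congrArg (List.drop x₁.toList.length) hps
    rwa [List.drop_left, List.drop_replicate, List.length_append,
      Nat.add_sub_cancel_left] at h
  have htl' : t.toList = List.replicate t.toList.length false := by
    have h := congrArg (List.drop y₁.toList.length) hpt
    rwa [List.drop_left, List.drop_replicate, List.length_append,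
      Nat.add_sub_cancel_left] at h
  have hSs : Ssum s = Multiplicative.ofAdd (s.toList.length : ℤ) := by
    conv_lhs => rw [← FreeMonoid.ofList_toList s, hsl]
    exact Ssum_replicate_true _
  have hSt : Ssum t = Multiplicative.ofAdd (-(t.toList.length : ℤ)) := by
    conv_lhs => rw [← FreeMonoid.ofList_toList t, htl']
    exact Ssum_replicate_false _
  -- pumped word is accepted
  have hpacc : (a ++ (b ++ b) ++ c) ∈ M.accepts := by
    apply hpump
    refine Language.append_mem_mul (Language.append_mem_mul rfl ?_) rfl
    have hbb : b ++ b = ([b, b] : List (List (Bool ⊕ Bool))).flatten := by simp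
    rw [hbb]
    refine Language.join_mem_kstar ?_
    intro y hy
    simp only [List.mem_cons, List.not_mem_nil, or_false] at hy
    rcases hy with rfl | rfl <;> rfl
  have hp2 : twoTapeHom Bool (FreeMonoid.ofList (a ++ (b ++ b) ++ c)) ∈ wordProblem fgen := by
    rw [← himg]
    exact ⟨FreeMonoid.ofList (a ++ (b ++ b) ++ c),
      by rw [Set.mem_setOf_eq, FreeMonoid.toList_ofList, ← hM]; exact hpacc, rfl⟩
  -- sums
  have hs := sum_eq hp2
  rw [FreeMonoid.ofList_append, FreeMonoid.ofList_append, FreeMonoid.ofList_append,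
    map_mul, map_mul, map_mul] at hs
  simp only [Prod.fst_mul, Prod.snd_mul, map_mul, ← hx₁, ← hy₁, ← hsdef, ← htdef,
    ← hx₂, ← hy₂] at hs
  have hXY := sum_eq hmem
  simp only at hXY
  have e1 : Ssum x₁ * Ssum s * Ssum x₂ = Ssum y₁ * Ssum t * Ssum y₂ := by
    rw [← map_mul, ← map_mul, ← map_mul, ← map_mul, hwfst, hwsnd]
    exact hXY
  -- conclude
  have hZ1 := congrArg Multiplicative.toAdd hs
  have hZ2 := congrArg Multiplicative.toAdd e1
  simp only [toAdd_mul] at hZ1 hZ2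
  have hst : Multiplicative.toAdd (Ssum s) = Multiplicative.toAdd (Ssum t) := by omega
  rw [hSs, hSt] at hst
  simp only [toAdd_ofAdd] at hst
  have hs0 : s.toList.length = 0 := by omega
  have ht0 : t.toList.length = 0 := by omega
  have : b.length = 0 := by omega
  exact hbne (List.eq_nil_of_length_eq_zero this)

end PrestonAux

/-- The free monogenic inverse semigroup does not have rational word problem:
the two-tape word problem of Preston's model `F` with respect to the generating
set `{u, u⁻¹} = {(0,1,1), (-1,0,-1)}` is not a rational relation. -/
theorem prestonF_wordProblem_not_rational :
    ¬ IsRationalRel (wordProblem (fun b : Bool => if b then uF else vF)) :=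
  PrestonAux.main
end

section
/- Let [u] be a monogenic inverse semigroup, generated as an inverse semigroup by an element u. Then at least one of the following holds: (1) u is a periodic element (u^r = u^{r+s} for some r, s ≥ 1); (2) [u] has a subgroup isomorphic to the infinite cyclic group ℤ; (3) [u] has a subsemigroup isomorphic to the bicyclic monoid; (4) [u] is isomorphic to the free monogenic inverse semigroup. -/
/-- `sgpow x n` is the `n`-th power `x^n` of `x` in a semigroup, for `n ≥ 1`
(with the junk value `sgpow x 0 = x`). -/
def sgpow {S : Type} [Semigroup S] (x : S) : ℕ → S
  | 0 => x
  | 1 => x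
  | (n + 2) => sgpow x (n + 1) * x

/-- The bicyclic monoid `Mon⟨b, c | bc = 1⟩`, modelled as `ℕ × ℕ` where `(m, n)`
stands for `cᵐbⁿ`. -/
def Bicyclic : Type := ℕ × ℕ

/-- Multiplication of the bicyclic monoid: `cᵐbⁿ · cᵖbᑫ = c^(m + (p ∸ n)) b^(q + (n ∸ p))`. -/
def bmul (x y : ℕ × ℕ) : ℕ × ℕ := (x.1 + (y.1 - x.2), y.2 + (x.2 - y.1))

instance : Monoid Bicyclic where
  mul x y := bmul x y
  one := ((0, 0) : ℕ × ℕ)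
  mul_assoc x y z := by
    show bmul (bmul x y) z = bmul x (bmul y z)
    simp only [bmul, Prod.mk.injEq]
    omega
  one_mul x := by
    obtain ⟨a, b⟩ := x
    show bmul (0, 0) (a, b) = (a, b)
    simp only [bmul, Prod.mk.injEq]
    omega
  mul_one x := by
    obtain ⟨a, b⟩ := x
    show bmul (a, b) (0, 0) = (a, b)
    simp only [bmul, Prod.mk.injEq]
    omega

/-!
Write `x'` for the inverse of `x`, and compute in `S` with an identity adjoined so that zero
exponents make sense. Since `F` is the free monogenic inverse semigroup, the word map
`(-l, n, m) ↦ uⁿ u'ⁿ⁺ˡ uᵐ⁺ˡ` is a homomorphism from `F` onto `[u]`. Everything depends on the two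
descending chains of idempotents `uⁿ u'ⁿ` and `u'ⁿ uⁿ`. If neither stabilises, the map is
injective: a triple `p` is determined by the idempotents `p p⁻¹` and `p⁻¹ p`, and conjugating by
powers of `u` carries the images of these into the two chains; so `[u] ≅ F`. If only the first chain stabilises, say
from `k` on, then `uᵏ` and `u'ᵏ` generate a bicyclic monoid (if only the second one does, use
`u'`). If both stabilise, the images of the triples far from the origin depend only on their last
coordinate and form a copy of `ℤ`, unless `u` is periodic.
-/

open Function

structure IsInverseSemigroupInv {S : Type*} [Semigroup S] (inv : S → S) : Prop where
  mul_inv_mul (x : S) : x * inv x * x = x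
  inv_mul_inv (x : S) : inv x * x * inv x = inv x
  eq_inv_of_mul_mul (x y : S) : x * y * x = x → y * x * y = y → y = inv x

theorem inF_iff {a b c : ℤ} : InF (a, b, c) ↔ a ≤ 0 ∧ 0 ≤ b ∧ a < b ∧ a ≤ c ∧ c ≤ b :=
  Iff.rfl

theorem pmul_mk_eq_iff {a b c a' b' c' a'' b'' c'' : ℤ} :
    pmul (a, b, c) (a', b', c') = (a'', b'', c'') ↔
      min a (c + a') = a'' ∧ max b (c + b') = b'' ∧ c + c' = c'' := by
  simp only [pmul, Prod.mk.injEq]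

/-- In `F` one has `(-l, n, m) = a ^ n * a⁻¹ ^ (n + l) * a ^ (m + l)` for `a = (0, 1, 1)`;
`prestonEval inv x` sends `(-l, n, m)` to the same word in `x` and `inv x`. -/
def prestonEval {M : Type*} [Monoid M] (inv : M → M) (x : M) (p : ℤ × ℤ × ℤ) : M :=
  x ^ p.2.1.toNat * inv x ^ (p.2.1 - p.1).toNat * x ^ (p.2.2 - p.1).toNat

section Monoid

variable {M : Type*} [Monoid M] (inv : M → M) (x : M)

theorem prestonEval_eq_pow_mul_inv_pow (m : ℤ) :
    prestonEval inv x (0, m, 0) = x ^ m.toNat * inv x ^ m.toNat := by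
  simp [prestonEval]

theorem prestonEval_eq_inv_pow_mul_pow (m : ℤ) :
    prestonEval inv x (m, 0, 0) = inv x ^ (-m).toNat * x ^ (-m).toNat := by
  simp [prestonEval]

theorem pow_mul_inv_pow_eq_of_le {k n : ℕ}
    (hk : x ^ k * inv x ^ k = x ^ (k + 1) * inv x ^ (k + 1)) (hkn : k ≤ n) :
    x ^ n * inv x ^ n = x ^ k * inv x ^ k := by
  induction n, hkn using Nat.le_induction with
  | base => rfl
  | succ n _ ih =>
    calc x ^ (n + 1) * inv x ^ (n + 1) = x * (x ^ n * inv x ^ n) * inv x := by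
          rw [pow_succ' x, pow_succ (inv x)]; simp only [mul_assoc]
      _ = x ^ (k + 1) * inv x ^ (k + 1) := by
          rw [ih, pow_succ' x, pow_succ (inv x)]; simp only [mul_assoc]
      _ = x ^ k * inv x ^ k := hk.symm

end Monoid

namespace IsInverseSemigroupInv

section Semigroup

variable {S : Type*} [Semigroup S] {inv : S → S} (h : IsInverseSemigroupInv inv)
include h

theorem inv_inv (x : S) : inv (inv x) = x :=
  (h.eq_inv_of_mul_mul _ _ (h.inv_mul_inv x) (h.mul_inv_mul x)).symm

theorem isIdempotentElem_mul_inv (x : S) : IsIdempotentElem (x * inv x) := by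
  rw [IsIdempotentElem, ← mul_assoc, h.mul_inv_mul]

theorem isIdempotentElem_inv_mul (x : S) : IsIdempotentElem (inv x * x) := by
  rw [IsIdempotentElem, ← mul_assoc, h.inv_mul_inv]

theorem inv_eq_self {e : S} (he : IsIdempotentElem e) : inv e = e :=
  (h.eq_inv_of_mul_mul e e (by rw [he.eq, he.eq]) (by rw [he.eq, he.eq])).symm

/-- `f * inv (e * f) * e` is an idempotent inverse of `e * f`, hence equal to `e * f`. -/
theorem isIdempotentElem_mul {e f : S} (he : IsIdempotentElem e) (hf : IsIdempotentElem f) :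
    IsIdempotentElem (e * f) := by
  set y := inv (e * f)
  have hy : y * (e * (f * y)) = y := by simpa only [mul_assoc] using h.inv_mul_inv (e * f)
  have hg : IsIdempotentElem (f * y * e) := by
    rw [IsIdempotentElem]
    calc f * y * e * (f * y * e) = f * (y * (e * (f * y))) * e := by simp only [mul_assoc]
      _ = f * y * e := by rw [hy]
  have hinv : f * y * e = y := by
    refine h.eq_inv_of_mul_mul _ _ ?_ ?_
    · simpa only [mul_assoc, he.mul_self_mul, hf.mul_self_mul] using h.mul_inv_mul (e * f)
    · calc f * y * e * (e * f) * (f * y * e) = f * (y * (e * (f * y))) * e := by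
            simp only [mul_assoc, he.mul_self_mul, hf.mul_self_mul]
        _ = f * y * e := by rw [hy]
  have hef : e * f = f * y * e := calc
    e * f = inv y := (h.inv_inv _).symm
    _ = inv (f * y * e) := by rw [hinv]
    _ = f * y * e := h.inv_eq_self hg
  rwa [hef]

theorem commute_of_isIdempotentElem {e f : S} (he : IsIdempotentElem e)
    (hf : IsIdempotentElem f) : Commute e f := by
  have hef := h.isIdempotentElem_mul he hf
  have hfe := h.isIdempotentElem_mul hf he
  have hinv : f * e = inv (e * f) := h.eq_inv_of_mul_mul _ _
    (by simpa only [mul_assoc, he.mul_self_mul, hf.mul_self_mul] using hef.eq)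
    (by simpa only [mul_assoc, he.mul_self_mul, hf.mul_self_mul] using hfe.eq)
  rw [Commute, SemiconjBy, hinv, h.inv_eq_self hef]

theorem inv_mul (x y : S) : inv (x * y) = inv y * inv x := by
  have hc : Commute (y * inv y) (inv x * x) :=
    h.commute_of_isIdempotentElem (h.isIdempotentElem_mul_inv y) (h.isIdempotentElem_inv_mul x)
  refine (h.eq_inv_of_mul_mul _ _ ?_ ?_).symm
  · calc x * y * (inv y * inv x) * (x * y) = x * ((y * inv y) * (inv x * x)) * y := by
          simp only [mul_assoc]
      _ = (x * inv x * x) * (y * inv y * y) := by rw [hc.eq]; simp only [mul_assoc]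
      _ = x * y := by rw [h.mul_inv_mul, h.mul_inv_mul]
  · calc inv y * inv x * (x * y) * (inv y * inv x)
          = inv y * ((inv x * x) * (y * inv y)) * inv x := by simp only [mul_assoc]
      _ = (inv y * y * inv y) * (inv x * x * inv x) := by rw [← hc.eq]; simp only [mul_assoc]
      _ = inv y * inv x := by rw [h.inv_mul_inv, h.inv_mul_inv]

end Semigroup

section Monoid

variable {M : Type*} [Monoid M] {inv : M → M} (h : IsInverseSemigroupInv inv)
include h

theorem inv_pow (x : M) (n : ℕ) : inv (x ^ n) = inv x ^ n := by
  induction n with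
  | zero => rw [pow_zero, pow_zero, h.inv_eq_self IsIdempotentElem.one]
  | succ n ih => rw [pow_succ, h.inv_mul, ih, pow_succ']

theorem pow_mul_inv_pow_mul_pow (x : M) (n : ℕ) : x ^ n * inv x ^ n * x ^ n = x ^ n := by
  rw [← h.inv_pow, h.mul_inv_mul]

theorem inv_pow_mul_pow_mul_inv_pow (x : M) (n : ℕ) :
    inv x ^ n * x ^ n * inv x ^ n = inv x ^ n := by
  rw [← h.inv_pow, h.inv_mul_inv]

theorem commute_pow_mul_inv_pow (x : M) (i j : ℕ) :
    Commute (x ^ i * inv x ^ i) (inv x ^ j * x ^ j) := by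
  rw [← h.inv_pow, ← h.inv_pow]
  exact h.commute_of_isIdempotentElem (h.isIdempotentElem_mul_inv _)
    (h.isIdempotentElem_inv_mul _)

theorem mul_inv_pow_succ_mul_pow_succ (x : M) (n : ℕ) :
    x * (inv x ^ (n + 1) * x ^ (n + 1)) = inv x ^ n * x ^ n * x := by
  have hc := h.commute_pow_mul_inv_pow x 1 n
  rw [pow_one, pow_one] at hc
  calc x * (inv x ^ (n + 1) * x ^ (n + 1)) = x * inv x * (inv x ^ n * x ^ n) * x := by
        rw [pow_succ' (inv x), pow_succ x]; simp only [mul_assoc]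
    _ = inv x ^ n * x ^ n * (x * inv x * x) := by rw [hc.eq]; simp only [mul_assoc]
    _ = inv x ^ n * x ^ n * x := by rw [h.mul_inv_mul]

theorem pow_succ_mul_inv (x : M) (n : ℕ) :
    x ^ (n + 1) * inv x = x ^ (n + 1) * inv x ^ (n + 1) * x ^ n := by
  have hc := h.commute_pow_mul_inv_pow x 1 n
  rw [pow_one, pow_one] at hc
  calc x ^ (n + 1) * inv x = (x ^ n * inv x ^ n * x ^ n) * (x * inv x) := by
        rw [h.pow_mul_inv_pow_mul_pow, pow_succ, mul_assoc]
    _ = x ^ n * ((inv x ^ n * x ^ n) * (x * inv x)) := by simp only [mul_assoc]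
    _ = x ^ (n + 1) * inv x ^ (n + 1) * x ^ n := by
        rw [← hc.eq, pow_succ, pow_succ']; simp only [mul_assoc]

theorem inv_pow_mul_pow_succ_mul_inv (x : M) (n d : ℕ) :
    inv x ^ (n + 1 + d) * (x ^ (n + 1) * inv x) = inv x ^ (n + 1 + d) * x ^ n := by
  calc inv x ^ (n + 1 + d) * (x ^ (n + 1) * inv x)
        = inv x ^ d * (inv x ^ (n + 1) * x ^ (n + 1) * inv x ^ (n + 1)) * x ^ n := by
        rw [h.pow_succ_mul_inv, add_comm (n + 1) d, pow_add]
        simp only [mul_assoc]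
    _ = inv x ^ (n + 1 + d) * x ^ n := by
        rw [h.inv_pow_mul_pow_mul_inv_pow, ← pow_add, add_comm d]

theorem pow_mul_inv_pow_eq_succ_of_lt (x : M) {i j : ℕ} (hij : i < j)
    (he : x ^ i * inv x ^ i = x ^ j * inv x ^ j) :
    x ^ i * inv x ^ i = x ^ (i + 1) * inv x ^ (i + 1) := by
  obtain ⟨d, rfl⟩ : ∃ d, j = i + 1 + d := ⟨j - i - 1, by omega⟩
  have hi : x ^ (i + 1) * inv x ^ (i + 1) * (x ^ i * inv x ^ i) =
      x ^ (i + 1) * inv x ^ (i + 1) := by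
    calc x ^ (i + 1) * inv x ^ (i + 1) * (x ^ i * inv x ^ i)
        = x ^ (i + 1) * (inv x * (inv x ^ i * x ^ i * inv x ^ i)) := by
          rw [pow_succ' (inv x)]; simp only [mul_assoc]
      _ = x ^ (i + 1) * inv x ^ (i + 1) := by
          rw [h.inv_pow_mul_pow_mul_inv_pow, ← pow_succ']
  have hj : x ^ (i + 1) * inv x ^ (i + 1) * (x ^ (i + 1 + d) * inv x ^ (i + 1 + d)) =
      x ^ (i + 1 + d) * inv x ^ (i + 1 + d) := by
    calc x ^ (i + 1) * inv x ^ (i + 1) * (x ^ (i + 1 + d) * inv x ^ (i + 1 + d))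
        = (x ^ (i + 1) * inv x ^ (i + 1) * x ^ (i + 1)) * x ^ d * inv x ^ (i + 1 + d) := by
          rw [pow_add x (i + 1) d]; simp only [mul_assoc]
      _ = x ^ (i + 1 + d) * inv x ^ (i + 1 + d) := by
          rw [h.pow_mul_inv_pow_mul_pow, ← pow_add]
  calc x ^ i * inv x ^ i = x ^ (i + 1 + d) * inv x ^ (i + 1 + d) := he
    _ = x ^ (i + 1) * inv x ^ (i + 1) * (x ^ (i + 1 + d) * inv x ^ (i + 1 + d)) := hj.symm
    _ = x ^ (i + 1) * inv x ^ (i + 1) * (x ^ i * inv x ^ i) := by rw [← he]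
    _ = x ^ (i + 1) * inv x ^ (i + 1) := hi

theorem exists_forall_pow_mul_inv_pow_eq (x : M)
    (hE : ¬ Injective fun n : ℕ => x ^ n * inv x ^ n) :
    ∃ k, ∀ n, k ≤ n → x ^ n * inv x ^ n = x ^ k * inv x ^ k := by
  simp only [Injective, not_forall] at hE
  obtain ⟨i, j, he, hij⟩ := hE
  rcases Nat.lt_or_gt_of_ne hij with hij | hji
  · exact ⟨i, fun _ => pow_mul_inv_pow_eq_of_le inv x (h.pow_mul_inv_pow_eq_succ_of_lt x hij he)⟩
  · exact ⟨j, fun _ =>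
      pow_mul_inv_pow_eq_of_le inv x (h.pow_mul_inv_pow_eq_succ_of_lt x hji he.symm)⟩

end Monoid

section Preston

variable {M : Type*} [Monoid M] {inv : M → M} (h : IsInverseSemigroupInv inv) (x : M)
include h

theorem prestonEval_pmul_gen {a b c : ℤ} (hp : InF (a, b, c)) :
    prestonEval inv x (pmul (a, b, c) (0, 1, 1)) = prestonEval inv x (a, b, c) * x := by
  rw [inF_iff] at hp
  rcases eq_or_lt_of_le hp.2.2.2.2 with rfl | hcb
  · rw [show pmul (a, c, c) (0, 1, 1) = (a, c + 1, c + 1) from pmul_mk_eq_iff.2 (by omega)]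
    simp only [prestonEval]
    rw [show (c + 1).toNat = c.toNat + 1 by omega,
      show (c + 1 - a).toNat = (c - a).toNat + 1 by omega, pow_succ x c.toNat]
    simp only [mul_assoc]
    rw [h.mul_inv_pow_succ_mul_pow_succ]
    simp only [mul_assoc]
  · rw [show pmul (a, b, c) (0, 1, 1) = (a, b, c + 1) from pmul_mk_eq_iff.2 (by omega)]
    simp only [prestonEval]
    rw [show (c + 1 - a).toNat = (c - a).toNat + 1 by omega, pow_succ]
    simp only [mul_assoc]

theorem prestonEval_pmul_genInv {a b c : ℤ} (hp : InF (a, b, c)) :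
    prestonEval inv x (pmul (a, b, c) (-1, 0, -1)) = prestonEval inv x (a, b, c) * inv x := by
  rw [inF_iff] at hp
  rcases eq_or_lt_of_le hp.2.2.2.1 with rfl | hac
  · rw [show pmul (a, b, a) (-1, 0, -1) = (a - 1, b, a - 1) from pmul_mk_eq_iff.2 (by omega)]
    simp only [prestonEval]
    rw [show (b - (a - 1)).toNat = (b - a).toNat + 1 by omega, sub_self, sub_self, pow_succ]
    simp only [Int.toNat_zero, pow_zero, mul_one, mul_assoc]
  · rw [show pmul (a, b, c) (-1, 0, -1) = (a, b, c - 1) from pmul_mk_eq_iff.2 (by omega)]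
    simp only [prestonEval]
    rw [show (b - a).toNat = (c - 1 - a).toNat + 1 + (b - c).toNat by omega,
      show (c - a).toNat = (c - 1 - a).toNat + 1 by omega]
    simp only [mul_assoc]
    rw [h.inv_pow_mul_pow_succ_mul_inv]

theorem prestonEval_pmul_gen_pow {p : ℤ × ℤ × ℤ} (hp : InF p) (n : ℕ) :
    prestonEval inv x (pmul p (0, n, n)) = prestonEval inv x p * x ^ n := by
  obtain ⟨a, b, c⟩ := p
  rw [inF_iff] at hp
  induction n with
  | zero =>
    rw [pow_zero, mul_one, show pmul (a, b, c) (0, ((0 : ℕ) : ℤ), ((0 : ℕ) : ℤ)) = (a, b, c) from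
      pmul_mk_eq_iff.2 (by omega)]
  | succ n ih =>
    have hq : pmul (a, b, c) (0, n, n) = (a, max b (c + n), c + n) := pmul_mk_eq_iff.2 (by omega)
    have hsucc : pmul (a, b, c) (0, ↑(n + 1), ↑(n + 1)) =
        pmul (a, max b (c + n), c + n) (0, 1, 1) := by
      rw [Prod.ext_iff, Prod.ext_iff]; dsimp only [pmul]; omega
    rw [hsucc, h.prestonEval_pmul_gen x (inF_iff.2 (by omega)), ← hq, ih,
      pow_succ, mul_assoc]

theorem prestonEval_pmul_genInv_pow {p : ℤ × ℤ × ℤ} (hp : InF p) (n : ℕ) :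
    prestonEval inv x (pmul p (-n, 0, -n)) = prestonEval inv x p * inv x ^ n := by
  obtain ⟨a, b, c⟩ := p
  rw [inF_iff] at hp
  induction n with
  | zero =>
    rw [pow_zero, mul_one, show pmul (a, b, c) (-((0 : ℕ) : ℤ), 0, -((0 : ℕ) : ℤ)) = (a, b, c) from
      pmul_mk_eq_iff.2 (by omega)]
  | succ n ih =>
    have hq : pmul (a, b, c) (-n, 0, -n) = (min a (c - n), b, c - n) := pmul_mk_eq_iff.2 (by omega)
    have hsucc : pmul (a, b, c) (-↑(n + 1), 0, -↑(n + 1)) =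
        pmul (min a (c - n), b, c - n) (-1, 0, -1) := by
      rw [Prod.ext_iff, Prod.ext_iff]; dsimp only [pmul]; omega
    rw [hsucc, h.prestonEval_pmul_genInv x (inF_iff.2 (by omega)), ← hq, ih,
      pow_succ, mul_assoc]

/-- Every `q ∈ F` is a word in `(0, 1, 1)` and `(-1, 0, -1)`, by which right multiplication is
`prestonEval_pmul_gen_pow` and `prestonEval_pmul_genInv_pow`. -/
theorem prestonEval_pmul {p q : ℤ × ℤ × ℤ} (hp : InF p) (hq : InF q) :
    prestonEval inv x (pmul p q) = prestonEval inv x p * prestonEval inv x q := by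
  obtain ⟨a, b, c⟩ := p
  obtain ⟨a', b', c'⟩ := q
  rw [inF_iff] at hp hq
  set p₁ := pmul (a, b, c) (0, b'.toNat, b'.toNat)
  set p₂ := pmul p₁ (-(b' - a').toNat, 0, -(b' - a').toNat)
  have hp₁ : InF p₁ := by dsimp only [p₁, pmul, InF]; omega
  have hp₂ : InF p₂ := by dsimp only [p₂, p₁, pmul, InF]; omega
  have hdecomp : pmul (a, b, c) (a', b', c') = pmul p₂ (0, (c' - a').toNat, (c' - a').toNat) := by
    rw [Prod.ext_iff, Prod.ext_iff]; dsimp only [p₂, p₁, pmul]; omega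
  rw [hdecomp, h.prestonEval_pmul_gen_pow x hp₂, h.prestonEval_pmul_genInv_pow x hp₁,
    h.prestonEval_pmul_gen_pow x (inF_iff.2 hp)]
  simp only [prestonEval, mul_assoc]

theorem prestonEval_mul_of_pmul_eq {p q r : ℤ × ℤ × ℤ} (hp : InF p) (hq : InF q)
    (hr : pmul p q = r) : prestonEval inv x p * prestonEval inv x q = prestonEval inv x r := by
  rw [← hr, h.prestonEval_pmul x hp hq]

theorem prestonEval_inv {a b c : ℤ} (hp : InF (a, b, c)) :
    prestonEval inv x (a - c, b - c, -c) = inv (prestonEval inv x (a, b, c)) := by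
  rw [inF_iff] at hp
  have hp' : InF (a - c, b - c, -c) := inF_iff.2 (by omega)
  refine h.eq_inv_of_mul_mul _ _ ?_ ?_
  · rw [h.prestonEval_mul_of_pmul_eq x (inF_iff.2 hp) hp' (r := (a, b, 0))
        (pmul_mk_eq_iff.2 (by omega)),
      h.prestonEval_mul_of_pmul_eq x (inF_iff.2 (by omega)) (inF_iff.2 hp) (r := (a, b, c))
        (pmul_mk_eq_iff.2 (by omega))]
  · rw [h.prestonEval_mul_of_pmul_eq x hp' (inF_iff.2 hp) (r := (a - c, b - c, 0))
        (pmul_mk_eq_iff.2 (by omega)),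
      h.prestonEval_mul_of_pmul_eq x (inF_iff.2 (by omega)) hp' (r := (a - c, b - c, -c))
        (pmul_mk_eq_iff.2 (by omega))]

theorem prestonEval_mul_inv {a b c : ℤ} (hp : InF (a, b, c)) :
    prestonEval inv x (a, b, c) * inv (prestonEval inv x (a, b, c)) =
      prestonEval inv x (a, b, 0) := by
  rw [← h.prestonEval_inv x hp]
  rw [inF_iff] at hp
  exact h.prestonEval_mul_of_pmul_eq x (inF_iff.2 hp) (inF_iff.2 (by omega))
    (pmul_mk_eq_iff.2 (by omega))

theorem inv_mul_prestonEval {a b c : ℤ} (hp : InF (a, b, c)) :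
    inv (prestonEval inv x (a, b, c)) * prestonEval inv x (a, b, c) =
      prestonEval inv x (a - c, b - c, 0) := by
  rw [← h.prestonEval_inv x hp]
  rw [inF_iff] at hp
  exact h.prestonEval_mul_of_pmul_eq x (inF_iff.2 (by omega)) (inF_iff.2 hp)
    (pmul_mk_eq_iff.2 (by omega))

theorem snd_eq_of_prestonEval_eq (hE : Injective fun n : ℕ => x ^ n * inv x ^ n)
    {a b a' b' : ℤ} (hp : InF (a, b, 0)) (hq : InF (a', b', 0))
    (he : prestonEval inv x (a, b, 0) = prestonEval inv x (a', b', 0)) : b = b' := by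
  have conj : ∀ {a b t : ℤ}, InF (a, b, 0) → 0 < t → -t ≤ a →
      prestonEval inv x (0, t, t) * prestonEval inv x (a, b, 0) * prestonEval inv x (-t, 0, -t) =
        prestonEval inv x (0, t + b, 0) := by
    intro a b t hp ht hta
    rw [inF_iff] at hp
    rw [h.prestonEval_mul_of_pmul_eq x (inF_iff.2 (by omega)) (inF_iff.2 hp) (r := (0, t + b, t))
        (pmul_mk_eq_iff.2 (by omega)),
      h.prestonEval_mul_of_pmul_eq x (inF_iff.2 (by omega)) (inF_iff.2 (by omega))
        (r := (0, t + b, 0)) (pmul_mk_eq_iff.2 (by omega))]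
  rw [inF_iff] at hp hq
  have hchain : prestonEval inv x (0, 1 - min a a' + b, 0) =
      prestonEval inv x (0, 1 - min a a' + b', 0) := by
    rw [← conj (inF_iff.2 hp) (by omega) (by omega), ← conj (inF_iff.2 hq) (by omega) (by omega),
      he]
  rw [prestonEval_eq_pow_mul_inv_pow, prestonEval_eq_pow_mul_inv_pow] at hchain
  have := hE hchain
  omega

theorem fst_eq_of_prestonEval_eq (hF : Injective fun n : ℕ => inv x ^ n * x ^ n)
    {a b a' b' : ℤ} (hp : InF (a, b, 0)) (hq : InF (a', b', 0))
    (he : prestonEval inv x (a, b, 0) = prestonEval inv x (a', b', 0)) : a = a' := by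
  have conj : ∀ {a b s : ℤ}, InF (a, b, 0) → 0 < s → b ≤ s →
      prestonEval inv x (-s, 0, -s) * prestonEval inv x (a, b, 0) * prestonEval inv x (0, s, s) =
        prestonEval inv x (a - s, 0, 0) := by
    intro a b s hp hs hbs
    rw [inF_iff] at hp
    rw [h.prestonEval_mul_of_pmul_eq x (inF_iff.2 (by omega)) (inF_iff.2 hp) (r := (a - s, 0, -s))
        (pmul_mk_eq_iff.2 (by omega)),
      h.prestonEval_mul_of_pmul_eq x (inF_iff.2 (by omega)) (inF_iff.2 (by omega))
        (r := (a - s, 0, 0)) (pmul_mk_eq_iff.2 (by omega))]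
  rw [inF_iff] at hp hq
  have hchain : prestonEval inv x (a - (1 + max b b'), 0, 0) =
      prestonEval inv x (a' - (1 + max b b'), 0, 0) := by
    rw [← conj (inF_iff.2 hp) (by omega) (by omega), ← conj (inF_iff.2 hq) (by omega) (by omega),
      he]
  rw [prestonEval_eq_inv_pow_mul_pow, prestonEval_eq_inv_pow_mul_pow] at hchain
  have := hF hchain
  omega

theorem eq_of_prestonEval_eq (hE : Injective fun n : ℕ => x ^ n * inv x ^ n)
    (hF : Injective fun n : ℕ => inv x ^ n * x ^ n) {p q : ℤ × ℤ × ℤ} (hp : InF p)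
    (hq : InF q) (he : prestonEval inv x p = prestonEval inv x q) : p = q := by
  obtain ⟨a, b, c⟩ := p
  obtain ⟨a', b', c'⟩ := q
  have hl : prestonEval inv x (a, b, 0) = prestonEval inv x (a', b', 0) := by
    rw [← h.prestonEval_mul_inv x hp, ← h.prestonEval_mul_inv x hq, he]
  have hr : prestonEval inv x (a - c, b - c, 0) = prestonEval inv x (a' - c', b' - c', 0) := by
    rw [← h.inv_mul_prestonEval x hp, ← h.inv_mul_prestonEval x hq, he]
  rw [inF_iff] at hp hq
  have ha := h.fst_eq_of_prestonEval_eq x hF (inF_iff.2 (by omega)) (inF_iff.2 (by omega)) hl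
  have hb := h.snd_eq_of_prestonEval_eq x hE (inF_iff.2 (by omega)) (inF_iff.2 (by omega)) hl
  have hc := h.fst_eq_of_prestonEval_eq x hF (inF_iff.2 (by omega)) (inF_iff.2 (by omega)) hr
  simp only [Prod.mk.injEq]
  omega

theorem prestonEval_eq_pow (m : ℤ) : prestonEval inv x (0, m, m) = x ^ m.toNat := by
  simp only [prestonEval, sub_zero, h.pow_mul_inv_pow_mul_pow]

theorem prestonEval_snd_congr (hE : ∀ n, 0 < n → x ^ n * inv x ^ n = x * inv x)
    {a b b' c : ℤ} (hp : InF (a, b, c)) (hq : InF (a, b', c)) (hb : 0 < b) (hb' : 0 < b') :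
    prestonEval inv x (a, b, c) = prestonEval inv x (a, b', c) := by
  have key : ∀ {b}, InF (a, b, c) → 0 < b →
      prestonEval inv x (a, b, c) = x * inv x * prestonEval inv x (a, max c 1, c) := by
    intro b hp hb
    rw [inF_iff] at hp
    calc prestonEval inv x (a, b, c)
        = prestonEval inv x (0, b, 0) * prestonEval inv x (a, max c 1, c) :=
          (h.prestonEval_mul_of_pmul_eq x (inF_iff.2 (by omega)) (inF_iff.2 (by omega))
            (pmul_mk_eq_iff.2 (by omega))).symm
      _ = x * inv x * prestonEval inv x (a, max c 1, c) := by
          rw [prestonEval_eq_pow_mul_inv_pow, hE _ (by omega)]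
  rw [key hp hb, key hq hb']

theorem prestonEval_fst_congr (hF : ∀ n, 0 < n → inv x ^ n * x ^ n = inv x * x)
    {a a' b c : ℤ} (hp : InF (a, b, c)) (hq : InF (a', b, c)) (ha : a < 0) (ha' : a' < 0) :
    prestonEval inv x (a, b, c) = prestonEval inv x (a', b, c) := by
  have key : ∀ {a}, InF (a, b, c) → a < 0 →
      prestonEval inv x (a, b, c) = inv x * x * prestonEval inv x (min c (-1), b, c) := by
    intro a hp ha
    rw [inF_iff] at hp
    calc prestonEval inv x (a, b, c)
        = prestonEval inv x (a, 0, 0) * prestonEval inv x (min c (-1), b, c) :=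
          (h.prestonEval_mul_of_pmul_eq x (inF_iff.2 (by omega)) (inF_iff.2 (by omega))
            (pmul_mk_eq_iff.2 (by omega))).symm
      _ = inv x * x * prestonEval inv x (min c (-1), b, c) := by
          rw [prestonEval_eq_inv_pow_mul_pow, hF _ (by omega)]
  rw [key hp ha, key hq ha']

end Preston

section Homs

variable {M : Type*} [Monoid M] {inv : M → M} (h : IsInverseSemigroupInv inv) (x : M)

/-- `cᵐbⁿ` goes to the image of `(-m, n + 1, n - m)`; this is multiplicative because the middle
coordinate of a triple does not matter once it is positive (`prestonEval_snd_congr`). -/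
def bicyclicHom (hE : ∀ n, 0 < n → x ^ n * inv x ^ n = x * inv x) : Bicyclic →ₙ* M where
  toFun g := prestonEval inv x (-(g.1 : ℤ), g.2 + 1, (g.2 : ℤ) - g.1)
  map_mul' := by
    rintro ⟨m, n⟩ ⟨p, q⟩
    calc prestonEval inv x (-((m + (p - n) : ℕ) : ℤ), ((q + (n - p) : ℕ) : ℤ) + 1,
          ((q + (n - p) : ℕ) : ℤ) - ((m + (p - n) : ℕ) : ℤ))
        = prestonEval inv x (-((m + (p - n) : ℕ) : ℤ), max ((n : ℤ) + 1) (n - m + (q + 1)),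
          ((q + (n - p) : ℕ) : ℤ) - ((m + (p - n) : ℕ) : ℤ)) :=
          h.prestonEval_snd_congr x hE (inF_iff.2 (by omega)) (inF_iff.2 (by omega)) (by omega)
            (by omega)
      _ = _ := (h.prestonEval_mul_of_pmul_eq x (inF_iff.2 (by omega)) (inF_iff.2 (by omega))
            (pmul_mk_eq_iff.2 (by omega))).symm

theorem bicyclicHom_injective (hE : ∀ n, 0 < n → x ^ n * inv x ^ n = x * inv x)
    (hF : Injective fun n : ℕ => inv x ^ n * x ^ n) :
    Injective (h.bicyclicHom x hE) := by
  rintro ⟨m, n⟩ ⟨p, q⟩ he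
  have hp : InF (-(m : ℤ), n + 1, n - m) := inF_iff.2 (by omega)
  have hq : InF (-(p : ℤ), q + 1, q - p) := inF_iff.2 (by omega)
  have hl : prestonEval inv x (-(m : ℤ), n + 1, 0) = prestonEval inv x (-(p : ℤ), q + 1, 0) := by
    rw [← h.prestonEval_mul_inv x hp, ← h.prestonEval_mul_inv x hq]
    exact congrArg (fun y => y * inv y) he
  have hr : prestonEval inv x (-(m : ℤ) - (n - m), n + 1 - (n - m), 0) =
      prestonEval inv x (-(p : ℤ) - (q - p), q + 1 - (q - p), 0) := by
    rw [← h.inv_mul_prestonEval x hp, ← h.inv_mul_prestonEval x hq]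
    exact congrArg (fun y => inv y * y) he
  have hmp := h.fst_eq_of_prestonEval_eq x hF (inF_iff.2 (by omega)) (inF_iff.2 (by omega)) hl
  have hnq := h.fst_eq_of_prestonEval_eq x hF (inF_iff.2 (by omega)) (inF_iff.2 (by omega)) hr
  obtain rfl : m = p := by omega
  obtain rfl : n = q := by omega
  rfl

/-- The images of the triples `(a, b, m)` with `a < 0 < b` depend only on `m`
(`prestonEval_snd_congr`, `prestonEval_fst_congr`), so they multiply like the integers `m`. -/
def intHom (hE : ∀ n, 0 < n → x ^ n * inv x ^ n = x * inv x)
    (hF : ∀ n, 0 < n → inv x ^ n * x ^ n = inv x * x) : Multiplicative ℤ →ₙ* M where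
  toFun c := prestonEval inv x (min 0 c.toAdd - 1, max 0 c.toAdd + 1, c.toAdd)
  map_mul' c c' := by
    obtain ⟨d, rfl⟩ : ∃ d : ℤ, Multiplicative.ofAdd d = c := ⟨c.toAdd, rfl⟩
    obtain ⟨d', rfl⟩ : ∃ d' : ℤ, Multiplicative.ofAdd d' = c' := ⟨c'.toAdd, rfl⟩
    simp only [toAdd_mul, toAdd_ofAdd]
    calc prestonEval inv x (min 0 (d + d') - 1, max 0 (d + d') + 1, d + d')
        = prestonEval inv x (min 0 (d + d') - 1, max (max 0 d + 1) (d + (max 0 d' + 1)), d + d') :=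
          h.prestonEval_snd_congr x hE (inF_iff.2 (by omega)) (inF_iff.2 (by omega)) (by omega)
            (by omega)
      _ = prestonEval inv x (min (min 0 d - 1) (d + (min 0 d' - 1)),
            max (max 0 d + 1) (d + (max 0 d' + 1)), d + d') :=
          h.prestonEval_fst_congr x hF (inF_iff.2 (by omega)) (inF_iff.2 (by omega)) (by omega)
            (by omega)
      _ = _ := (h.prestonEval_mul_of_pmul_eq x (inF_iff.2 (by omega)) (inF_iff.2 (by omega))
            (pmul_mk_eq_iff.2 (by omega))).symm

theorem intHom_injective_or_exists_pow_eq (hE : ∀ n, 0 < n → x ^ n * inv x ^ n = x * inv x)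
    (hF : ∀ n, 0 < n → inv x ^ n * x ^ n = inv x * x) :
    Injective (h.intHom x hE hF) ∨ ∃ m n : ℕ, 0 < m ∧ m < n ∧ x ^ m = x ^ n := by
  refine or_iff_not_imp_left.2 fun hinj => ?_
  obtain ⟨c, c', he, hne⟩ : ∃ c c', h.intHom x hE hF c = h.intHom x hE hF c' ∧ c ≠ c' := by
    simpa [Injective] using hinj
  obtain ⟨t, ht⟩ : ∃ t : ℤ, t = 1 - min 0 c.toAdd - min 0 c'.toAdd := ⟨_, rfl⟩
  have key : ∀ d : ℤ, 1 - t ≤ min 0 d →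
      prestonEval inv x (0, t, t) * prestonEval inv x (min 0 d - 1, max 0 d + 1, d) =
        x ^ (t + d).toNat := by
    intro d hd
    calc _ = prestonEval inv x (0, t + (max 0 d + 1), t + d) :=
          h.prestonEval_mul_of_pmul_eq x (inF_iff.2 (by omega)) (inF_iff.2 (by omega))
            (pmul_mk_eq_iff.2 (by omega))
      _ = prestonEval inv x (0, t + d, t + d) :=
          h.prestonEval_snd_congr x hE (inF_iff.2 (by omega)) (inF_iff.2 (by omega)) (by omega)
            (by omega)
      _ = x ^ (t + d).toNat := h.prestonEval_eq_pow x _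
  have hpow : x ^ (t + c.toAdd).toNat = x ^ (t + c'.toAdd).toNat := by
    rw [← key _ (by omega), ← key _ (by omega)]
    exact congrArg _ he
  have hne' : c.toAdd ≠ c'.toAdd := fun hcc => hne (Multiplicative.toAdd.injective hcc)
  rcases lt_or_gt_of_ne hne' with hlt | hlt
  · exact ⟨_, _, by omega, by omega, hpow⟩
  · exact ⟨_, _, by omega, by omega, hpow.symm⟩

def prestonHom : PrestonF →ₙ* M where
  toFun p := prestonEval inv x p.1
  map_mul' p q := h.prestonEval_pmul x p.2 q.2

theorem prestonHom_injective (hE : Injective fun n : ℕ => x ^ n * inv x ^ n)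
    (hF : Injective fun n : ℕ => inv x ^ n * x ^ n) :
    Injective (h.prestonHom x) :=
  fun p q he => Subtype.ext (h.eq_of_prestonEval_eq x hE hF p.2 q.2 he)

include h in
theorem pow_pow_mul_inv_pow_pow_eq {k : ℕ}
    (hk : ∀ n, k ≤ n → x ^ n * inv x ^ n = x ^ k * inv x ^ k) {K : ℕ} (hkK : k ≤ K) :
    ∀ n, 0 < n → (x ^ K) ^ n * inv (x ^ K) ^ n = x ^ K * inv (x ^ K) := by
  intro n hn
  rw [h.inv_pow, ← pow_mul, ← pow_mul, hk _ (hkK.trans (Nat.le_mul_of_pos_right K hn)), hk _ hkK]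

include h in
theorem injective_inv_pow_pow_mul_pow_pow (hF : Injective fun n : ℕ => inv x ^ n * x ^ n)
    {K : ℕ} (hK : 0 < K) : Injective fun n : ℕ => inv (x ^ K) ^ n * (x ^ K) ^ n := by
  intro m n he
  simp only [h.inv_pow, ← pow_mul] at he
  exact Nat.eq_of_mul_eq_mul_left hK (hF he)

end Homs

end IsInverseSemigroupInv

theorem WithOne.mul_eq_one_iff {S : Type*} [Semigroup S] {v w : WithOne S} :
    v * w = 1 ↔ v = 1 ∧ w = 1 := by
  cases v <;> cases w <;> simp [← WithOne.coe_mul]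

def MulHom.unone {G S : Type*} [Mul G] [Semigroup S] (f : G →ₙ* WithOne S)
    (hf : ∀ g, f g ≠ 1) : G →ₙ* S where
  toFun g := WithOne.unone (hf g)
  map_mul' _ _ := WithOne.coe_injective (by simp only [WithOne.coe_mul, WithOne.coe_unone, map_mul])

theorem MulHom.unone_injective {G S : Type*} [Mul G] [Semigroup S] {f : G →ₙ* WithOne S}
    (hf : ∀ g, f g ≠ 1) (hinj : Injective f) : Injective (f.unone hf) :=
  fun g g' he => hinj (by
    rw [← WithOne.coe_unone (hf g), ← WithOne.coe_unone (hf g')]; exact congrArg _ he)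

theorem MulHom.exists_subsemigroup_mulEquiv {G S : Type*} [Mul G] [Mul S] (f : G →ₙ* S)
    (hf : Injective f) : ∃ T : Subsemigroup S, Nonempty (T ≃* G) :=
  ⟨f.srange, ⟨(MulEquiv.ofBijective f.srangeRestrict
    ⟨fun _ _ he => hf (congrArg Subtype.val he), f.srangeRestrict_surjective⟩).symm⟩⟩

theorem coe_sgpow {S : Type} [Semigroup S] (u : S) {n : ℕ} (hn : 0 < n) :
    ((sgpow u n : S) : WithOne S) = (u : WithOne S) ^ n := by
  induction n with
  | zero => omega
  | succ n ih =>
    rcases n with _ | n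
    · simp [sgpow]
    · rw [sgpow, WithOne.coe_mul, ih (by omega), pow_succ (u : WithOne S) (n + 1)]

theorem exists_sgpow_eq_of_pow_eq {S : Type} [Semigroup S] {u : S} {m n : ℕ} (hm : 0 < m)
    (hmn : m < n) (he : (u : WithOne S) ^ m = (u : WithOne S) ^ n) :
    ∃ r s : ℕ, 1 ≤ r ∧ 1 ≤ s ∧ sgpow u r = sgpow u (r + s) :=
  ⟨m, n - m, hm, by omega, WithOne.coe_injective (by
    rw [coe_sgpow u hm, coe_sgpow u (by omega), Nat.add_sub_cancel' hmn.le, he])⟩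

def withOneInv {S : Type*} (inv : S → S) : WithOne S → WithOne S :=
  WithOne.recOneCoe 1 fun s => (inv s : WithOne S)

@[simp]
theorem withOneInv_one {S : Type*} (inv : S → S) : withOneInv inv 1 = 1 :=
  rfl

@[simp]
theorem withOneInv_coe {S : Type*} (inv : S → S) (s : S) :
    withOneInv inv (s : WithOne S) = (inv s : WithOne S) :=
  rfl

theorem WithOne.pow_ne_one {S : Type*} [Semigroup S] {x : WithOne S} (hx : x ≠ 1) {n : ℕ}
    (hn : n ≠ 0) : x ^ n ≠ 1 := by
  obtain ⟨m, rfl⟩ := Nat.exists_eq_succ_of_ne_zero hn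
  rw [pow_succ, Ne, WithOne.mul_eq_one_iff]
  exact fun h1 => hx h1.2

theorem prestonEval_withOneInv_ne_one {S : Type*} [Semigroup S] {inv : S → S} {x : WithOne S}
    (hx : x ≠ 1) {p : ℤ × ℤ × ℤ} (hp : InF p) : prestonEval (withOneInv inv) x p ≠ 1 := by
  obtain ⟨s, rfl⟩ := WithOne.ne_one_iff_exists.1 hx
  obtain ⟨a, b, c⟩ := p
  rw [inF_iff] at hp
  have hinv : withOneInv inv (s : WithOne S) ^ (b - a).toNat ≠ 1 :=
    WithOne.pow_ne_one WithOne.coe_ne_one (by omega)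
  simp only [prestonEval, Ne, WithOne.mul_eq_one_iff] at hinv ⊢
  tauto

namespace IsInverseSemigroupInv

variable {S : Type*} [Semigroup S] {inv : S → S} (h : IsInverseSemigroupInv inv)
include h

theorem withOne : IsInverseSemigroupInv (withOneInv inv) where
  mul_inv_mul w := by
    cases w with
    | one => rfl
    | coe s => rw [withOneInv_coe, ← WithOne.coe_mul, ← WithOne.coe_mul, h.mul_inv_mul]
  inv_mul_inv w := by
    cases w with
    | one => rfl
    | coe s => rw [withOneInv_coe, ← WithOne.coe_mul, ← WithOne.coe_mul, h.inv_mul_inv]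
  eq_inv_of_mul_mul w v hw hv := by
    cases w with
    | one => simpa using hw
    | coe s =>
      cases v with
      | one => simp at hv
      | coe t =>
        simp only [← WithOne.coe_mul, WithOne.coe_inj] at hw hv
        rw [withOneInv_coe, h.eq_inv_of_mul_mul s t hw hv]

theorem nonempty_mulEquiv_prestonF (u : S)
    (hgen : ∀ T : Subsemigroup S, u ∈ T → (∀ x ∈ T, inv x ∈ T) → ∀ x : S, x ∈ T)
    (hE : Injective fun n : ℕ => (u : WithOne S) ^ n * withOneInv inv u ^ n)
    (hF : Injective fun n : ℕ => withOneInv inv u ^ n * (u : WithOne S) ^ n) :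
    Nonempty (S ≃* PrestonF) := by
  have hne : ∀ p, h.withOne.prestonHom (u : WithOne S) p ≠ 1 :=
    fun p => prestonEval_withOneInv_ne_one WithOne.coe_ne_one p.2
  set φ := (h.withOne.prestonHom (u : WithOne S)).unone hne
  have hφ : ∀ p, (φ p : WithOne S) = prestonEval (withOneInv inv) u p.1 :=
    fun p => WithOne.coe_unone _
  refine ⟨(MulEquiv.ofBijective φ ⟨MulHom.unone_injective hne
    (h.withOne.prestonHom_injective _ hE hF), fun s => hgen φ.srange ?_ ?_ s⟩).symm⟩
  · refine MulHom.mem_srange.2 ⟨⟨(0, 1, 1), inF_iff.2 (by norm_num)⟩,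
      WithOne.coe_injective ((hφ _).trans ?_)⟩
    exact (h.withOne.prestonEval_eq_pow _ 1).trans (pow_one _)
  · rintro _ ⟨⟨⟨a, b, c⟩, hp⟩, rfl⟩
    refine MulHom.mem_srange.2 ⟨⟨(a - c, b - c, -c), inF_iff.2 (by rw [inF_iff] at hp; omega)⟩,
      WithOne.coe_injective ((hφ _).trans ?_)⟩
    exact (h.withOne.prestonEval_inv _ hp).trans (congrArg (withOneInv inv) (hφ ⟨_, hp⟩).symm)

theorem exists_subsemigroup_mulEquiv_bicyclic {x : WithOne S} (hx : x ≠ 1)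
    (hE : ¬ Injective fun n : ℕ => x ^ n * withOneInv inv x ^ n)
    (hF : Injective fun n : ℕ => withOneInv inv x ^ n * x ^ n) :
    ∃ T : Subsemigroup S, Nonempty (T ≃* Bicyclic) := by
  obtain ⟨k, hk⟩ := h.withOne.exists_forall_pow_mul_inv_pow_eq x hE
  have hE' := h.withOne.pow_pow_mul_inv_pow_pow_eq x hk k.le_succ
  have hne : ∀ g, h.withOne.bicyclicHom _ hE' g ≠ 1 := fun g =>
    prestonEval_withOneInv_ne_one (WithOne.pow_ne_one hx k.succ_ne_zero) (inF_iff.2 (by omega))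
  exact ((h.withOne.bicyclicHom _ hE').unone hne).exists_subsemigroup_mulEquiv
    (MulHom.unone_injective hne (h.withOne.bicyclicHom_injective _ hE'
      (h.withOne.injective_inv_pow_pow_mul_pow_pow x hF k.succ_pos)))

theorem exists_pow_eq_or_exists_subsemigroup_mulEquiv_int (u : S)
    (hE : ¬ Injective fun n : ℕ => (u : WithOne S) ^ n * withOneInv inv u ^ n)
    (hF : ¬ Injective fun n : ℕ => withOneInv inv u ^ n * (u : WithOne S) ^ n) :
    (∃ m n : ℕ, 0 < m ∧ m < n ∧ (u : WithOne S) ^ m = (u : WithOne S) ^ n) ∨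
      ∃ T : Subsemigroup S, Nonempty (T ≃* Multiplicative ℤ) := by
  have h₁ := h.withOne
  obtain ⟨k, hk⟩ := h₁.exists_forall_pow_mul_inv_pow_eq _ hE
  obtain ⟨l, hl⟩ := h₁.exists_forall_pow_mul_inv_pow_eq (withOneInv inv u) (by rwa [h₁.inv_inv])
  set y := (u : WithOne S) ^ (k + l + 1)
  have hE' := h₁.pow_pow_mul_inv_pow_pow_eq _ hk (K := k + l + 1) (by omega)
  have hF' : ∀ n, 0 < n → withOneInv inv y ^ n * y ^ n = withOneInv inv y * y := by
    simpa only [y, h₁.inv_pow, h₁.inv_inv] using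
      h₁.pow_pow_mul_inv_pow_pow_eq _ hl (K := k + l + 1) (by omega)
  rcases h₁.intHom_injective_or_exists_pow_eq y hE' hF' with hinj | ⟨m, n, hm, hmn, he⟩
  · have hne : ∀ c, h₁.intHom y hE' hF' c ≠ 1 := fun c =>
      prestonEval_withOneInv_ne_one (WithOne.pow_ne_one WithOne.coe_ne_one (by omega))
        (inF_iff.2 (by omega))
    exact Or.inr (((h₁.intHom y hE' hF').unone hne).exists_subsemigroup_mulEquiv
      (MulHom.unone_injective hne hinj))
  · refine Or.inl ⟨(k + l + 1) * m, (k + l + 1) * n, by positivity,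
      Nat.mul_lt_mul_of_pos_left hmn (by omega), ?_⟩
    rw [pow_mul, pow_mul, he]

end IsInverseSemigroupInv

/-- Every monogenic inverse semigroup `[u]` (here: a semigroup `S` with unique
inverses, generated as an inverse semigroup by the single element `u`) either has
a periodic generator, or contains a subgroup isomorphic to the infinite cyclic
group `ℤ`, or contains a subsemigroup isomorphic to the bicyclic monoid, or is
isomorphic to the free monogenic inverse semigroup. -/
theorem monogenic_inverse_semigroup_cases (S : Type) [Semigroup S]
    (inv : S → S)
    (hinv : ∀ x : S, x * inv x * x = x ∧ inv x * x * inv x = inv x)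
    (huniq : ∀ x y : S, x * y * x = x → y * x * y = y → y = inv x)
    (u : S)
    (hgen : ∀ T : Subsemigroup S, u ∈ T → (∀ x ∈ T, inv x ∈ T) → ∀ x : S, x ∈ T) :
    (∃ r s : ℕ, 1 ≤ r ∧ 1 ≤ s ∧ sgpow u r = sgpow u (r + s)) ∨
    (∃ T : Subsemigroup S, Nonempty (↥T ≃* Multiplicative ℤ)) ∨
    (∃ T : Subsemigroup S, Nonempty (↥T ≃* Bicyclic)) ∨
    Nonempty (S ≃* PrestonF) := by
  have h : IsInverseSemigroupInv inv := ⟨fun x => (hinv x).1, fun x => (hinv x).2, huniq⟩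
  by_cases hE : Injective fun n : ℕ => (u : WithOne S) ^ n * withOneInv inv u ^ n <;>
    by_cases hF : Injective fun n : ℕ => withOneInv inv u ^ n * (u : WithOne S) ^ n
  · exact Or.inr (Or.inr (Or.inr (h.nonempty_mulEquiv_prestonF u hgen hE hF)))
  · refine Or.inr (Or.inr (Or.inl (h.exists_subsemigroup_mulEquiv_bicyclic
      (x := withOneInv inv u) WithOne.coe_ne_one ?_ ?_))) <;> rwa [h.withOne.inv_inv]
  · exact Or.inr (Or.inr (Or.inl
      (h.exists_subsemigroup_mulEquiv_bicyclic WithOne.coe_ne_one hE hF)))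
  · rcases h.exists_pow_eq_or_exists_subsemigroup_mulEquiv_int u hE hF with
      ⟨m, n, hm, hmn, he⟩ | hZ
    · exact Or.inl (exists_sgpow_eq_of_pow_eq hm hmn he)
    · exact Or.inr (Or.inl hZ)
end

section
/- Let u be a partial injection which is the union of a family of pairwise strongly disjoint forward links λᵢ (i ∈ I), and let λ be any one of these links. Then the inverse semigroup [u] generated by u (inside the symmetric inverse semigroup of partial bijections under composition) is isomorphic to the inverse semigroup [λ] generated by λ. -/
/-- The symmetric inverse semigroup: partial bijections of `X` under composition. -/
instance PEquiv.instSemigroup {X : Type} : Semigroup (PEquiv X X) where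
  mul f g := f.trans g
  mul_assoc f g h := by
    apply PEquiv.ext
    intro x
    show ((f.trans g).trans h) x = (f.trans (g.trans h)) x
    simp [PEquiv.trans]
    cases f x <;> simp

/-- The inverse subsemigroup `[u]` of the symmetric inverse semigroup generated by a
partial bijection `u`: the smallest subsemigroup containing `u` and closed under
taking inverse partial bijections. -/
def invClosure {X : Type} (u : PEquiv X X) : Subsemigroup (PEquiv X X) :=
  sInf {T : Subsemigroup (PEquiv X X) | u ∈ T ∧ ∀ f ∈ T, f.symm ∈ T}

/-- A forward link: the partial injection `aᵢ ↦ aᵢ₊₁` on a countably infinite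
sequence of distinct elements `a₀, a₁, a₂, …`, undefined elsewhere. -/
def IsForwardLink {X : Type} (f : PEquiv X X) : Prop :=
  ∃ a : ℕ → X, Function.Injective a ∧ (∀ i : ℕ, f (a i) = some (a (i + 1))) ∧
    (∀ x : X, (∀ i : ℕ, x ≠ a i) → f x = none)

/-- Two partial bijections `λ : A → B` and `μ : C → D` are strongly disjoint if
`A ∩ C = A ∩ D = B ∩ C = B ∩ D = ∅`, i.e. `(A ∪ B) ∩ (C ∪ D) = ∅`. -/
def StronglyDisjoint {X : Type} (f g : PEquiv X X) : Prop :=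
  ∀ x : X, (f x ≠ none ∨ f.symm x ≠ none) → (g x = none ∧ g.symm x = none)


/-! Choosing for each link `λᵢ` its sequence, the links run along pairwise disjoint rails
`a : I × ℕ → X`, and `u` moves every point of a rail one step forward. The inverse semigroup
`[u]` then consists exactly of the partial bijections `a (i, m + k) ↦ a (i, n + k)` for
`m n : ℕ`, acting simultaneously on all rails. These compose like the elements `⟨m, n⟩` of the
bicyclic monoid, faithfully as soon as there is one rail, so `[u]` is the bicyclic monoid
whatever the number of links; in particular `[u] ≅ [λ]`. -/

open Function

lemma PEquiv.mul_eq_trans {X : Type} (f g : PEquiv X X) : f * g = f.trans g := rfl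

section InvClosure

variable {X : Type}

lemma mem_invClosure_self (u : PEquiv X X) : u ∈ invClosure u :=
  Subsemigroup.mem_sInf.2 fun _ hT => hT.1

lemma symm_mem_invClosure {u f : PEquiv X X} (hf : f ∈ invClosure u) : f.symm ∈ invClosure u :=
  Subsemigroup.mem_sInf.2 fun T hT => hT.2 f (Subsemigroup.mem_sInf.1 hf T hT)

/-- `symm` reverses products, so the closure of `{u, u.symm}` is already closed under `symm`. -/
lemma invClosure_eq_closure (u : PEquiv X X) :
    invClosure u = Subsemigroup.closure {u, u.symm} := by
  refine le_antisymm (sInf_le ⟨Subsemigroup.subset_closure (by simp), fun f hf => ?_⟩) ?_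
  · induction hf using Subsemigroup.closure_induction with
    | mem f hf =>
      rcases hf with rfl | rfl <;> exact Subsemigroup.subset_closure (by simp)
    | mul f g _ _ hf hg =>
      rw [PEquiv.mul_eq_trans, PEquiv.symm_trans_rev]
      exact mul_mem hg hf
  · rw [Subsemigroup.closure_le]
    rintro f (rfl | rfl)
    exacts [mem_invClosure_self _, symm_mem_invClosure (mem_invClosure_self _)]

end InvClosure

/-- The bicyclic monoid `⟨p, q | p * q = 1⟩`, where `⟨m, n⟩` stands for `q ^ m * p ^ n`. -/
@[ext] structure Bicyclic_s5 where
  m : ℕ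
  n : ℕ

namespace Bicyclic_s5

instance : Mul Bicyclic_s5 := ⟨fun x y => ⟨x.m + (y.m - x.n), y.n + (x.n - y.m)⟩⟩

lemma mul_def (x y : Bicyclic_s5) : x * y = ⟨x.m + (y.m - x.n), y.n + (x.n - y.m)⟩ := rfl

instance : Semigroup Bicyclic_s5 where
  mul_assoc x y z := by
    simp only [mul_def, mk.injEq]
    omega

lemma closure_generators :
    Subsemigroup.closure {⟨0, 1⟩, ⟨1, 0⟩} = (⊤ : Subsemigroup Bicyclic_s5) := by
  set S := Subsemigroup.closure ({⟨0, 1⟩, ⟨1, 0⟩} : Set Bicyclic_s5)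
  have hp : (⟨0, 1⟩ : Bicyclic_s5) ∈ S := Subsemigroup.subset_closure (by simp)
  have hq : (⟨1, 0⟩ : Bicyclic_s5) ∈ S := Subsemigroup.subset_closure (by simp)
  rw [eq_top_iff]
  rintro ⟨m, n⟩ -
  induction m with
  | zero =>
    induction n with
    | zero => exact mul_mem hp hq
    | succ n ih => simpa [mul_def, add_comm] using mul_mem ih hp
  | succ m ih => simpa [mul_def, add_comm] using mul_mem hq ih

end Bicyclic_s5

section Shift

variable {X I : Type} {a : I × ℕ → X}

noncomputable def shiftFun (a : I × ℕ → X) (m n : ℕ) (x : X) : Option X :=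
  (partialInv a x).bind fun p => if m ≤ p.2 then some (a (p.1, n + (p.2 - m))) else none

lemma shiftFun_eq_some_iff (ha : Injective a) (m n : ℕ) (x y : X) :
    shiftFun a m n x = some y ↔ ∃ i k, a (i, m + k) = x ∧ a (i, n + k) = y := by
  simp only [shiftFun, Option.bind_eq_some_iff, ha.isPartialInv _ x, Prod.exists]
  constructor
  · rintro ⟨i, t, rfl, h⟩
    split_ifs at h with ht
    exact ⟨i, t - m, by rw [Nat.add_sub_cancel' ht], Option.some_injective _ h⟩
  · rintro ⟨i, k, rfl, rfl⟩
    exact ⟨i, m + k, rfl, by simp⟩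

/-- The partial bijection `a (i, m + k) ↦ a (i, n + k)` of all rails of `a` at once. -/
noncomputable def shift (ha : Injective a) (m n : ℕ) : PEquiv X X where
  toFun := shiftFun a m n
  invFun := shiftFun a n m
  inv x y := by
    simp only [shiftFun_eq_some_iff ha]
    constructor <;> rintro ⟨i, k, h, h'⟩ <;> exact ⟨i, k, h', h⟩

variable (ha : Injective a)

lemma shift_eq_some_iff {m n : ℕ} {x y : X} :
    shift ha m n x = some y ↔ ∃ i k, a (i, m + k) = x ∧ a (i, n + k) = y :=
  shiftFun_eq_some_iff ha m n x y

lemma shift_apply_rail (i : I) (m n : ℕ) : shift ha m n (a (i, m)) = some (a (i, n)) :=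
  (shift_eq_some_iff ha).2 ⟨i, 0, rfl, rfl⟩

lemma shift_symm (m n : ℕ) : (shift ha m n).symm = shift ha n m := rfl

lemma shift_mul (m n m' n' : ℕ) :
    shift ha m n * shift ha m' n' = shift ha (m + (m' - n)) (n' + (n - m')) := by
  ext x y
  simp only [PEquiv.mul_eq_trans, PEquiv.trans_eq_some, shift_eq_some_iff]
  constructor
  · rintro ⟨z, ⟨i, k, rfl, rfl⟩, ⟨i', k', hz, rfl⟩⟩
    obtain ⟨rfl, hk⟩ := Prod.mk.inj (ha hz)
    refine ⟨i', k - (m' - n), ?_, ?_⟩ <;> congr 2 <;> omega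
  · rintro ⟨i, k, rfl, rfl⟩
    refine ⟨_, ⟨i, m' - n + k, ?_, rfl⟩, ⟨i, n - m' + k, ?_, ?_⟩⟩ <;> congr 2 <;> omega

lemma shift_injective [Nonempty I] {m n m' n' : ℕ} (h : shift ha m n = shift ha m' n') :
    m = m' ∧ n = n' := by
  obtain ⟨i₀⟩ := ‹Nonempty I›
  have offset : ∀ {m n m' n'}, shift ha m n = shift ha m' n' →
      ∃ k, m = m' + k ∧ n = n' + k := by
    intro m n m' n' h
    obtain ⟨i, k, h₁, h₂⟩ := (shift_eq_some_iff ha).1 (h ▸ shift_apply_rail ha i₀ m n)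
    exact ⟨k, (Prod.mk.inj (ha h₁)).2.symm, (Prod.mk.inj (ha h₂)).2.symm⟩
  obtain ⟨k, hm, hn⟩ := offset h
  obtain ⟨k', hm', hn'⟩ := offset h.symm
  omega

noncomputable def shiftHom : Bicyclic_s5 →ₙ* PEquiv X X where
  toFun x := shift ha x.m x.n
  map_mul' x y := (shift_mul ha x.m x.n y.m y.n).symm

lemma shiftHom_injective [Nonempty I] : Injective (shiftHom ha) := fun x y h => by
  obtain ⟨hm, hn⟩ := shift_injective ha h
  exact Bicyclic_s5.ext hm hn

lemma srange_shiftHom : (shiftHom ha).srange = invClosure (shift ha 0 1) := by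
  rw [MulHom.srange_eq_map, ← Bicyclic_s5.closure_generators, MulHom.map_mclosure,
    invClosure_eq_closure, shift_symm, Set.image_pair]
  rfl

noncomputable def bicyclicEquivInvClosure [Nonempty I] :
    Bicyclic_s5 ≃* invClosure (shift ha 0 1) :=
  (MulEquiv.ofBijective (shiftHom ha).srangeRestrict
    ⟨fun _ _ h => shiftHom_injective ha (congrArg Subtype.val h),
      (shiftHom ha).srangeRestrict_surjective⟩).trans
    (MulEquiv.subsemigroupCongr (srange_shiftHom ha))

end Shift

section ForwardLinks

variable {X I : Type} {l : I → PEquiv X X}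

lemma injective_rails {a : I → ℕ → X} (hinj : ∀ i, Injective (a i))
    (hfwd : ∀ i t, l i (a i t) = some (a i (t + 1)))
    (hdisj : ∀ i j : I, i ≠ j → StronglyDisjoint (l i) (l j)) :
    Injective fun p : I × ℕ => a p.1 p.2 := by
  rintro ⟨i, s⟩ ⟨i', s'⟩ h
  dsimp only at h
  obtain rfl : i = i' := by
    by_contra hii
    have hnone := (hdisj i i' hii (a i s) (Or.inl (by simp [hfwd]))).1
    simp [h, hfwd] at hnone
  rw [hinj i h]

lemma exists_shift_eq_of_forwardLinks (hlinks : ∀ i : I, IsForwardLink (l i))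
    (hdisj : ∀ i j : I, i ≠ j → StronglyDisjoint (l i) (l j)) {u : PEquiv X X}
    (hu : ∀ x y : X, u x = some y ↔ ∃ i : I, l i x = some y) :
    ∃ (a : I × ℕ → X) (ha : Injective a), u = shift ha 0 1 := by
  choose a hinj hfwd hnone using hlinks
  refine ⟨_, injective_rails hinj hfwd hdisj, ?_⟩
  ext x y
  simp only [hu, shift_eq_some_iff, zero_add]
  constructor
  · rintro ⟨i, hi⟩
    by_cases hx : ∃ t, x = a i t
    · obtain ⟨t, rfl⟩ := hx
      rw [hfwd] at hi
      exact ⟨i, t, rfl, by rw [add_comm, Option.some_injective _ hi]⟩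
    · simp [hnone i x (not_exists.1 hx)] at hi
  · rintro ⟨i, k, rfl, rfl⟩
    exact ⟨i, by rw [hfwd, add_comm]⟩

end ForwardLinks

/-- If `u` is the union of a family of pairwise strongly disjoint forward links
`λᵢ` and `λ` is any one of these links, then the inverse semigroup `[u]` generated
by `u` is isomorphic to the inverse semigroup `[λ]` generated by `λ`. -/
theorem invClosure_union_of_forwardLinks_mulEquiv {X I : Type} (l : I → PEquiv X X)
    (hlinks : ∀ i : I, IsForwardLink (l i))
    (hdisj : ∀ i j : I, i ≠ j → StronglyDisjoint (l i) (l j))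
    (u : PEquiv X X)
    (hu : ∀ x y : X, u x = some y ↔ ∃ i : I, l i x = some y)
    (j : I) :
    Nonempty (↥(invClosure u) ≃* ↥(invClosure (l j))) := by
  have : Nonempty I := ⟨j⟩
  obtain ⟨a, ha, rfl⟩ := exists_shift_eq_of_forwardLinks hlinks hdisj hu
  obtain ⟨b, hb, hlj⟩ := exists_shift_eq_of_forwardLinks (l := fun _ : Unit => l j)
    (fun _ => hlinks j) (fun _ _ h => absurd (Subsingleton.elim _ _) h) (u := l j)
    (fun _ _ => (exists_const Unit).symm)
  rw [hlj]
  exact ⟨(bicyclicEquivInvClosure ha).symm.trans (bicyclicEquivInvClosure hb)⟩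
end

section
/- Every finite semigroup has rational word problem: for any finite semigroup S and any finite generating set A of S, the two-tape word problem ι(S,A) is a rational relation. -/
section Aux
variable {A S : Type} [Semigroup S] (f : A → S)

/-- product of a word in `WithOne S`. -/
def wpPhi (l : List A) : WithOne S := (l.map fun a => ((f a : WithOne S))).prod

lemma wpPhi_nil : wpPhi f [] = 1 := rfl

lemma wpPhi_append (l₁ l₂ : List A) : wpPhi f (l₁ ++ l₂) = wpPhi f l₁ * wpPhi f l₂ := by
  simp [wpPhi]

lemma wpPhi_coe (w : FreeSemigroup A) :
    wpPhi f (freeSemigroupToWord w).toList = ((FreeSemigroup.lift f w : S) : WithOne S) := by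
  induction w with
  | ih1 a =>
      simp [freeSemigroupToWord, FreeSemigroup.lift_of, wpPhi]
  | ih2 x y hx hy =>
      rw [map_mul freeSemigroupToWord, map_mul (FreeSemigroup.lift f), FreeMonoid.toList_mul, wpPhi_append, hx, hy, WithOne.coe_mul]

lemma exists_freeSemigroup : ∀ l : List A, l ≠ [] →
    ∃ w : FreeSemigroup A, (freeSemigroupToWord w).toList = l := by
  intro l hl
  induction l with
  | nil => exact absurd rfl hl
  | cons a t ih =>
      rcases eq_or_ne t [] with rfl | ht
      · exact ⟨FreeSemigroup.of a, by simp [freeSemigroupToWord, FreeSemigroup.lift_of]⟩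
      · obtain ⟨w, hw⟩ := ih ht
        refine ⟨FreeSemigroup.of a * w, ?_⟩
        rw [map_mul freeSemigroupToWord, FreeMonoid.toList_mul, hw]
        simp [freeSemigroupToWord, FreeSemigroup.lift_of]

lemma wpPhi_ne_one {l : List A} (hl : l ≠ []) : wpPhi f l ≠ 1 := by
  obtain ⟨w, hw⟩ := exists_freeSemigroup l hl
  rw [← hw, wpPhi_coe]
  exact WithOne.coe_ne_one

open scoped Classical

/-- The two-tape DFA recognising `inl`-words followed by `inr`-words with equal value. -/
noncomputable def wpDFA : DFA (A ⊕ A) (Option (WithOne S × WithOne S)) where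
  step q c := match q, c with
    | none, _ => none
    | some (x, y), Sum.inl a => if y = 1 then some (x * (f a : WithOne S), 1) else none
    | some (x, y), Sum.inr a => some (x, y * (f a : WithOne S))
  start := some (1, 1)
  accept := {q | ∃ s : S, q = some ((s : WithOne S), (s : WithOne S))}

lemma wpDFA_eval_spec (w : List (A ⊕ A)) :
    (∃ l₁ l₂ : List A, w = l₁.map Sum.inl ++ l₂.map Sum.inr ∧
      (wpDFA f).eval w = some (wpPhi f l₁, wpPhi f l₂)) ∨ (wpDFA f).eval w = none := by
  induction w using List.reverseRecOn with
  | nil => exact Or.inl ⟨[], [], rfl, rfl⟩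
  | append_singleton w c ih =>
      rw [DFA.eval, DFA.evalFrom_append_singleton, ← DFA.eval]
      rcases ih with ⟨l₁, l₂, hw, he⟩ | he
      · rw [he]
        cases c with
        | inl a =>
            rcases eq_or_ne l₂ [] with rfl | h2
            · refine Or.inl ⟨l₁ ++ [a], [], by simp [hw], ?_⟩
              show (if wpPhi f [] = 1 then _ else _) = _
              rw [if_pos (wpPhi_nil f)]
              simp [wpPhi_append, wpPhi]
            · refine Or.inr ?_
              show (if wpPhi f l₂ = 1 then _ else _) = _
              rw [if_neg (wpPhi_ne_one f h2)]
        | inr a =>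
            refine Or.inl ⟨l₁, l₂ ++ [a], by simp [hw], ?_⟩
            show some (wpPhi f l₁, wpPhi f l₂ * _) = _
            rw [wpPhi_append]
            simp [wpPhi]
      · rw [he]
        cases c <;> exact Or.inr rfl

lemma twoTape_decomp (l₁ l₂ : List A) :
    twoTapeHom A (FreeMonoid.ofList (l₁.map Sum.inl ++ l₂.map Sum.inr)) =
      (FreeMonoid.ofList l₁, FreeMonoid.ofList l₂) := by
  rw [twoTapeHom, FreeMonoid.lift_ofList, List.map_append, List.prod_append,
    List.map_map, List.map_map]
  have h1 : ∀ l : List A,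
      (l.map (Sum.elim (fun a => ((FreeMonoid.of a : FreeMonoid A), (1 : FreeMonoid A)))
        (fun a => (1, FreeMonoid.of a)) ∘ Sum.inl)).prod = (FreeMonoid.ofList l, 1) := by
    intro l
    induction l with
    | nil => rfl
    | cons a t iht =>
        rw [List.map_cons, List.prod_cons, iht]
        rfl
  have h2 : ∀ l : List A,
      (l.map (Sum.elim (fun a => ((FreeMonoid.of a : FreeMonoid A), (1 : FreeMonoid A)))
        (fun a => (1, FreeMonoid.of a)) ∘ Sum.inr)).prod = (1, FreeMonoid.ofList l) := by
    intro l
    induction l with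
    | nil => rfl
    | cons a t iht =>
        rw [List.map_cons, List.prod_cons, iht]
        rfl
  rw [h1, h2, Prod.mk_mul_mk, mul_one, one_mul]

end Aux

section Aux2
variable {A S : Type} [Semigroup S] (f : A → S)
open scoped Classical

lemma wpDFA_evalFrom_inl (l : List A) : ∀ x : WithOne S,
    (wpDFA f).evalFrom (some (x, 1)) (l.map Sum.inl) = some (x * wpPhi f l, 1) := by
  induction l with
  | nil => intro x; simp [wpPhi_nil]
  | cons a t ih =>
      intro x
      have hstep : (wpDFA f).step (some (x, 1)) (Sum.inl a) =
          some (x * (f a : WithOne S), 1) := by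
        show (if (1 : WithOne S) = 1 then _ else _) = _
        rw [if_pos rfl]
      rw [List.map_cons]
      show (wpDFA f).evalFrom ((wpDFA f).step (some (x, 1)) (Sum.inl a)) (t.map Sum.inl) = _
      rw [hstep, ih, mul_assoc]
      rfl

lemma wpDFA_evalFrom_inr (l : List A) : ∀ x y : WithOne S,
    (wpDFA f).evalFrom (some (x, y)) (l.map Sum.inr) = some (x, y * wpPhi f l) := by
  induction l with
  | nil => intro x y; simp [wpPhi_nil]
  | cons a t ih =>
      intro x y
      rw [List.map_cons]
      show (wpDFA f).evalFrom ((wpDFA f).step (some (x, y)) (Sum.inr a)) (t.map Sum.inr) = _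
      show (wpDFA f).evalFrom (some (x, y * (f a : WithOne S))) (t.map Sum.inr) = _
      rw [ih, mul_assoc]
      rfl

lemma wpDFA_eval_decomp (l₁ l₂ : List A) :
    (wpDFA f).eval (l₁.map Sum.inl ++ l₂.map Sum.inr) = some (wpPhi f l₁, wpPhi f l₂) := by
  rw [DFA.eval, DFA.evalFrom_of_append]
  have h1 : (wpDFA f).evalFrom (wpDFA f).start (l₁.map Sum.inl) = some (wpPhi f l₁, 1) := by
    have := wpDFA_evalFrom_inl f l₁ 1
    rwa [one_mul] at this
  rw [h1, wpDFA_evalFrom_inr, one_mul]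

end Aux2


/-- Every finite semigroup has rational word problem: for any finite semigroup `S`
and any finite generating set `A` of `S`, the two-tape word problem `ι(S,A)` is a
rational relation. -/
theorem finite_semigroup_wordProblem_rational (S : Type) [Semigroup S] [Finite S]
    (A : Type) [Fintype A] (f : A → S)
    (hgen : Function.Surjective ⇑(FreeSemigroup.lift f)) :
    IsRationalRel (wordProblem f) := by
  haveI := Fintype.ofFinite S
  haveI : Fintype (WithOne S) := inferInstanceAs (Fintype (Option S))
  refine ⟨(wpDFA f).accepts, ⟨Option (WithOne S × WithOne S), Fintype.ofFinite _, wpDFA f, rfl⟩, ?_⟩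
  have main : twoTapeHom A '' {w : FreeMonoid (A ⊕ A) | w.toList ∈ (wpDFA f).accepts} =
      {p | ∃ w₁ w₂ : FreeSemigroup A,
        FreeSemigroup.lift f w₁ = FreeSemigroup.lift f w₂ ∧
        p = (freeSemigroupToWord w₁, freeSemigroupToWord w₂)} := by
    ext p
    constructor
    · rintro ⟨w, hw, rfl⟩
      obtain ⟨s, hs⟩ := hw
      rcases wpDFA_eval_spec f (FreeMonoid.toList w) with ⟨l₁, l₂, hdec, he⟩ | he
      all_goals simp only [DFA.eval] at he; rw [he] at hs
      case inr => simp at hs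
      · obtain ⟨h1, h2⟩ : wpPhi f l₁ = (s : WithOne S) ∧ wpPhi f l₂ = (s : WithOne S) := by
          have := Option.some.inj hs
          exact ⟨congrArg Prod.fst this, congrArg Prod.snd this⟩
        have hl₁ : l₁ ≠ [] := by
          rintro rfl
          exact WithOne.coe_ne_one ((wpPhi_nil f).symm.trans h1).symm
        have hl₂ : l₂ ≠ [] := by
          rintro rfl
          exact WithOne.coe_ne_one ((wpPhi_nil f).symm.trans h2).symm
        obtain ⟨w₁, hw₁⟩ := exists_freeSemigroup l₁ hl₁
        obtain ⟨w₂, hw₂⟩ := exists_freeSemigroup l₂ hl₂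
        refine ⟨w₁, w₂, ?_, ?_⟩
        · have e1 : ((FreeSemigroup.lift f w₁ : S) : WithOne S) = (s : WithOne S) := by
            rw [← wpPhi_coe, hw₁, h1]
          have e2 : ((FreeSemigroup.lift f w₂ : S) : WithOne S) = (s : WithOne S) := by
            rw [← wpPhi_coe, hw₂, h2]
          rw [WithOne.coe_inj.mp e1, WithOne.coe_inj.mp e2]
        · have hwm : w = FreeMonoid.ofList (l₁.map Sum.inl ++ l₂.map Sum.inr) := by
            rw [← hdec, FreeMonoid.ofList_toList]
          rw [hwm, twoTape_decomp, ← hw₁, ← hw₂,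
            FreeMonoid.ofList_toList, FreeMonoid.ofList_toList]
    · rintro ⟨w₁, w₂, heq, rfl⟩
      refine ⟨FreeMonoid.ofList (((freeSemigroupToWord w₁).toList).map Sum.inl ++
        ((freeSemigroupToWord w₂).toList).map Sum.inr), ?_, ?_⟩
      · show (wpDFA f).eval (((freeSemigroupToWord w₁).toList).map Sum.inl ++
          ((freeSemigroupToWord w₂).toList).map Sum.inr) ∈ (wpDFA f).accept
        rw [wpDFA_eval_decomp, wpPhi_coe, wpPhi_coe, heq]
        exact ⟨FreeSemigroup.lift f w₂, rfl⟩
      · rw [twoTape_decomp, FreeMonoid.ofList_toList, FreeMonoid.ofList_toList]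
  exact main
end

section
/- The bicyclic monoid does not have rational word problem. -/
/-!
Suppose `ι(B, A)` is rational, and pick nonempty words `β, γ` over `A` representing `b` and `c`.
Every pair `(βⁿ⁺¹γⁿ⁺¹, βγ)` lies in `ι(B, A)`. Cut an accepted input for it at the point where
the first tape has finished `βⁿ⁺¹`. The prefix has only finitely many Myhill–Nerode classes, and
it can have written only boundedly much of `βγ`. So for some `n ≠ m` the two prefixes agree on
both counts, and the second halves can be swapped: `(βⁿ⁺¹γᵐ⁺¹, βγ)` is accepted too, although
`bⁿ⁺¹cᵐ⁺¹ ≠ 1 = bc`.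
-/

section FreeSemigroupToWord

variable {A : Type}

theorem FreeMonoid.of_mul_eq_of_mul_iff {a b : A} {x y : FreeMonoid A} :
    of a * x = of b * y ↔ a = b ∧ x = y :=
  List.cons_eq_cons

theorem freeSemigroupToWord_of (a : A) :
    freeSemigroupToWord (FreeSemigroup.of a) = FreeMonoid.of a :=
  rfl

theorem freeSemigroupToWord_ne_one (w : FreeSemigroup A) : freeSemigroupToWord w ≠ 1 := by
  induction w using FreeSemigroup.recOnMul with
  | ih1 a => exact FreeMonoid.of_ne_one a
  | ih2 a w _ _ =>
    rw [map_mul, freeSemigroupToWord_of]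
    exact mul_ne_one'.2 (Or.inl (FreeMonoid.of_ne_one a))

theorem exists_freeSemigroupToWord_eq {x : FreeMonoid A} (hx : x ≠ 1) :
    ∃ w : FreeSemigroup A, freeSemigroupToWord w = x := by
  induction x using FreeMonoid.inductionOn' with
  | one => exact absurd rfl hx
  | of_mul a x ih =>
    by_cases hx₁ : x = 1
    · exact ⟨FreeSemigroup.of a, by rw [hx₁, mul_one, freeSemigroupToWord_of]⟩
    · obtain ⟨w, rfl⟩ := ih hx₁
      exact ⟨FreeSemigroup.of a * w, by rw [map_mul, freeSemigroupToWord_of]⟩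

theorem lift_freeSemigroupToWord {S : Type} [Monoid S] (f : A → S) (w : FreeSemigroup A) :
    FreeMonoid.lift f (freeSemigroupToWord w) = FreeSemigroup.lift f w := by
  induction w using FreeSemigroup.recOnMul with
  | ih1 a => rfl
  | ih2 a w _ ih => rw [map_mul, map_mul, map_mul, ih]; rfl

end FreeSemigroupToWord

theorem mem_wordProblem_iff {A S : Type} [Monoid S] {f : A → S} {u v : FreeMonoid A} :
    (u, v) ∈ wordProblem f ↔ u ≠ 1 ∧ v ≠ 1 ∧ FreeMonoid.lift f u = FreeMonoid.lift f v := by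
  constructor
  · rintro ⟨w₁, w₂, h, huv⟩
    obtain ⟨rfl, rfl⟩ := Prod.mk.inj huv
    refine ⟨freeSemigroupToWord_ne_one w₁, freeSemigroupToWord_ne_one w₂, ?_⟩
    rw [lift_freeSemigroupToWord, lift_freeSemigroupToWord, h]
  · rintro ⟨hu, hv, h⟩
    obtain ⟨w₁, rfl⟩ := exists_freeSemigroupToWord_eq hu
    obtain ⟨w₂, rfl⟩ := exists_freeSemigroupToWord_eq hv
    rw [lift_freeSemigroupToWord, lift_freeSemigroupToWord] at h
    exact ⟨w₁, w₂, h, rfl⟩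

section TwoTape

variable {A : Type}

@[simp]
theorem twoTapeHom_of_inl (a : A) : twoTapeHom A (.of (.inl a)) = (.of a, 1) := rfl

@[simp]
theorem twoTapeHom_of_inr (a : A) : twoTapeHom A (.of (.inr a)) = (1, .of a) := rfl

theorem exists_mul_of_twoTapeHom_fst_eq_mul (t : FreeMonoid (A ⊕ A)) {x y : FreeMonoid A}
    (h : (twoTapeHom A t).1 = x * y) :
    ∃ t₁ t₂, t = t₁ * t₂ ∧ (twoTapeHom A t₁).1 = x ∧ (twoTapeHom A t₂).1 = y := by
  induction t using FreeMonoid.inductionOn' generalizing x with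
  | one =>
    obtain ⟨rfl, rfl⟩ := mul_eq_one'.1 h.symm
    exact ⟨1, 1, rfl, rfl, rfl⟩
  | of_mul s t ih =>
    rcases s with a | a
    · induction x using FreeMonoid.casesOn with
      | one => exact ⟨1, .of (.inl a) * t, (one_mul _).symm, rfl, by rw [h, one_mul]⟩
      | of_mul b x =>
        simp only [map_mul, Prod.fst_mul, twoTapeHom_of_inl, mul_assoc] at h
        obtain ⟨rfl, ht⟩ := FreeMonoid.of_mul_eq_of_mul_iff.1 h
        obtain ⟨t₁, t₂, rfl, h₁, h₂⟩ := ih ht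
        exact ⟨.of (.inl a) * t₁, t₂, (mul_assoc ..).symm, by simp [h₁], h₂⟩
    · simp only [map_mul, Prod.fst_mul, twoTapeHom_of_inr, one_mul] at h
      obtain ⟨t₁, t₂, rfl, h₁, h₂⟩ := ih h
      exact ⟨.of (.inr a) * t₁, t₂, (mul_assoc ..).symm, by simp [h₁], h₂⟩

theorem IsRationalRel.exists_ne_mul_mem {R : Set (FreeMonoid A × FreeMonoid A)}
    (hR : IsRationalRel R) {u v : ℕ → FreeMonoid A} {w : FreeMonoid A}
    (h : ∀ n, (u n * v n, w) ∈ R) : ∃ n m, n ≠ m ∧ (u n * v m, w) ∈ R := by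
  obtain ⟨L, hL, rfl⟩ := hR
  have hsplit : ∀ n, ∃ p q : FreeMonoid (A ⊕ A), (p * q).toList ∈ L ∧
      (twoTapeHom A p).1 = u n ∧ (twoTapeHom A q).1 = v n ∧
      (twoTapeHom A p).2 * (twoTapeHom A q).2 = w := by
    intro n
    obtain ⟨t, ht, htw⟩ := h n
    obtain ⟨p, q, rfl, hp, hq⟩ := exists_mul_of_twoTapeHom_fst_eq_mul t (congrArg Prod.fst htw)
    exact ⟨p, q, ht, hp, hq, by rw [← Prod.snd_mul, ← map_mul, htw]⟩
  choose p q hpq hp hq hw using hsplit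
  obtain ⟨n, -, m, -, hnm, heq⟩ :
      ∃ n ∈ Set.univ, ∃ m ∈ Set.univ, n ≠ m ∧
        (L.leftQuotient (p n).toList, (twoTapeHom A (p n)).2.length) =
          (L.leftQuotient (p m).toList, (twoTapeHom A (p m)).2.length) := by
    refine Set.infinite_univ.exists_ne_map_eq_of_mapsTo
      (t := Set.range L.leftQuotient ×ˢ Set.Iic w.length)
      (fun n _ => ⟨Set.mem_range_self _, ?_⟩)
      (hL.finite_range_leftQuotient.prod (Set.finite_Iic _))
    simp only [Set.mem_Iic, ← hw n, FreeMonoid.length_mul, Nat.le_add_right]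
  obtain ⟨hquot, hlen⟩ := Prod.mk.inj heq
  have hprefix : (twoTapeHom A (p n)).2 = (twoTapeHom A (p m)).2 :=
    (List.append_inj ((hw n).trans (hw m).symm) hlen).1
  refine ⟨n, m, hnm, p n * q m, ?_, ?_⟩
  · change (q m).toList ∈ L.leftQuotient (p n).toList
    rw [hquot]
    exact hpq m
  · rw [map_mul, Prod.mul_def, hp, hq, hprefix, hw]

end TwoTape

namespace Bicyclic

def mk (m n : ℕ) : Bicyclic := (m, n)

def b : Bicyclic := mk 0 1

def c : Bicyclic := mk 1 0

theorem mk_mul_mk (m n p q : ℕ) : mk m n * mk p q = mk (m + (p - n)) (q + (n - p)) := rfl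

theorem one_def : (1 : Bicyclic) = mk 0 0 := rfl

theorem mk_inj {m n p q : ℕ} : mk m n = mk p q ↔ m = p ∧ n = q := Prod.ext_iff

theorem b_mul_c : b * c = 1 := rfl

theorem b_pow (n : ℕ) : b ^ n = mk 0 n := by
  induction n with
  | zero => rfl
  | succ n ih => rw [pow_succ, ih, b, mk_mul_mk, Nat.zero_sub, Nat.sub_zero, add_comm 1]

theorem c_pow (n : ℕ) : c ^ n = mk n 0 := by
  induction n with
  | zero => rfl
  | succ n ih => rw [pow_succ, ih, c, mk_mul_mk, Nat.sub_zero, Nat.zero_sub, add_zero]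

theorem b_pow_mul_c_pow_eq_one_iff {i j : ℕ} : b ^ i * c ^ j = 1 ↔ i = j := by
  rw [b_pow, c_pow, mk_mul_mk, one_def, mk_inj]
  omega

end Bicyclic

/-- The bicyclic monoid does not have rational word problem. -/
theorem bicyclic_not_hasRationalWordProblem : ¬ HasRationalWordProblem Bicyclic := by
  rintro ⟨A, _, f, hsurj, hrat⟩
  obtain ⟨β, hβ⟩ := hsurj Bicyclic.b
  obtain ⟨γ, hγ⟩ := hsurj Bicyclic.c
  set B := freeSemigroupToWord β
  set C := freeSemigroupToWord γ
  have hB : FreeMonoid.lift f B = Bicyclic.b := (lift_freeSemigroupToWord f β).trans hβ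
  have hC : FreeMonoid.lift f C = Bicyclic.c := (lift_freeSemigroupToWord f γ).trans hγ
  have hB₁ : B ≠ 1 := freeSemigroupToWord_ne_one β
  have key (i j : ℕ) : (B ^ (i + 1) * C ^ (j + 1), B * C) ∈ wordProblem f ↔ i = j := by
    rw [mem_wordProblem_iff, map_mul, map_mul, map_pow, map_pow, hB, hC, Bicyclic.b_mul_c,
      Bicyclic.b_pow_mul_c_pow_eq_one_iff]
    simp [pow_succ', hB₁]
  obtain ⟨n, m, hnm, hmem⟩ := hrat.exists_ne_mul_mem (u := fun n => B ^ (n + 1))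
    (v := fun n => C ^ (n + 1)) fun n => (key n n).2 rfl
  exact hnm ((key n m).1 hmem)
end

section
/- The free commutative semigroup on two generators does not have rational word problem. -/
/-- The free commutative semigroup on two generators, modelled as
`(ℕ × ℕ) \\ {(0,0)}` under componentwise addition. -/
def FreeComm2 : Type := {p : ℕ × ℕ // p ≠ (0, 0)}

instance : Mul FreeComm2 :=
  ⟨fun x y => ⟨(x.1.1 + y.1.1, x.1.2 + y.1.2), by
    obtain ⟨⟨a, b⟩, h⟩ := x
    obtain ⟨⟨c, d⟩, h'⟩ := y
    simp [Prod.ext_iff] at h h' ⊢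
    omega⟩⟩

instance : Semigroup FreeComm2 where
  mul_assoc x y z := by
    apply Subtype.ext
    show ((x.1.1 + y.1.1) + z.1.1, (x.1.2 + y.1.2) + z.1.2)
        = (x.1.1 + (y.1.1 + z.1.1), x.1.2 + (y.1.2 + z.1.2))
    simp only [Prod.mk.injEq]
    omega

/-!
Suppose the word problem with respect to a finite generating set `A` were rational. Since
`(1,0)` and `(0,1)` are not products, they are the values of letters `a` and `b`, and
`(aᵐbᵐ, bᵐaᵐ)` lies in the word problem. Pumping this pair inside its first `m` letters, with `m`
larger than the pumping constant, repeats a block `(aⁱ, bʲ)` with `i + j > 0`; the pumped pair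
`(aᵐ⁺ⁱbᵐ, bᵐ⁺ʲaᵐ)` then has different values on its two tapes.
-/

open scoped Computability

variable {A : Type}

theorem FreeSemigroup.exists_apply_eq_of_surjective_lift {S : Type} [Semigroup S] {f : A → S}
    (hf : Function.Surjective (FreeSemigroup.lift f)) {x : S} (hx : ∀ y z, y * z ≠ x) :
    ∃ a, f a = x := by
  obtain ⟨s, rfl⟩ := hf x
  induction s using FreeSemigroup.recOnMul with
  | ih1 a => exact ⟨a, rfl⟩
  | ih2 a s _ _ => exact absurd (map_mul _ _ _).symm (hx _ _)

theorem freeSemigroupToWord_mk (a : A) (l : List A) :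
    freeSemigroupToWord ⟨a, l⟩ = FreeMonoid.ofList (a :: l) := by
  induction l generalizing a with
  | nil => rfl
  | cons b l ih =>
    change freeSemigroupToWord (FreeSemigroup.of a * ⟨b, l⟩) = _
    rw [map_mul, ih]
    rfl

theorem mem_range_freeSemigroupToWord {w : FreeMonoid A} :
    w ∈ Set.range freeSemigroupToWord ↔ w ≠ 1 := by
  constructor
  · rintro ⟨⟨a, l⟩, rfl⟩
    rw [freeSemigroupToWord_mk]
    exact List.cons_ne_nil a l
  · intro hw
    obtain ⟨a, l, rfl⟩ := List.exists_cons_of_ne_nil hw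
    exact ⟨⟨a, l⟩, freeSemigroupToWord_mk a l⟩

@[simp]
theorem FreeMonoid.length_ofList (l : List A) : (FreeMonoid.ofList l).length = l.length := rfl

theorem FreeMonoid.eq_ofList_replicate_of_mul_mul_eq {x y z t : FreeMonoid A} {a : A} {n : ℕ}
    (h : x * y * z = FreeMonoid.ofList (List.replicate n a) * t)
    (hn : x.length + y.length ≤ n) :
    y = FreeMonoid.ofList (List.replicate y.length a) := by
  refine List.eq_replicate_iff.2 ⟨rfl, fun c hc => ?_⟩
  have hprefix : x.toList ++ y.toList <+: List.replicate n a :=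
    List.prefix_of_prefix_length_le ⟨z.toList, h⟩ (List.prefix_append _ _)
      (by rw [List.length_append, List.length_replicate]; exact hn)
  exact List.eq_of_mem_replicate (hprefix.subset (List.mem_append_right _ hc))

theorem length_fst_add_length_snd_twoTapeHom (w : FreeMonoid (A ⊕ A)) :
    (twoTapeHom A w).1.length + (twoTapeHom A w).2.length = w.length := by
  induction w using FreeMonoid.inductionOn' with
  | one => rfl
  | of_mul c w ih =>
    rw [map_mul, Prod.fst_mul, Prod.snd_mul, FreeMonoid.length_mul, FreeMonoid.length_mul,
      FreeMonoid.length_mul, ← ih]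
    cases c <;> simp [twoTapeHom] <;> omega

theorem FreeMonoid.toList_ofList_pow_mem_kstar (l : List A) (k : ℕ) :
    (FreeMonoid.ofList l ^ k).toList ∈ ({l} : Language A)∗ := by
  refine Language.mem_kstar.2 ⟨List.replicate k l, ?_, fun m hm => List.eq_of_mem_replicate hm⟩
  rw [← List.prod_replicate, ← List.map_replicate, ← FreeMonoid.ofList_flatten]
  rfl

theorem IsRationalRel.exists_pumping {R : Set (FreeMonoid A × FreeMonoid A)}
    (hR : IsRationalRel R) :
    ∃ N, ∀ p ∈ R, N ≤ p.1.length + p.2.length →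
      ∃ x y z, p = x * y * z ∧ x.1.length + y.1.length + (x.2.length + y.2.length) ≤ N ∧
        y ≠ 1 ∧ ∀ k : ℕ, x * y ^ k * z ∈ R := by
  obtain ⟨L, ⟨σ, _, M, rfl⟩, rfl⟩ := hR
  refine ⟨Fintype.card σ, ?_⟩
  rintro _ ⟨w, hw, rfl⟩ hlen
  rw [length_fst_add_length_snd_twoTapeHom] at hlen
  obtain ⟨a, b, c, hw_eq, hlen_ab, hb, hpump⟩ := M.pumping_lemma hw hlen
  replace hw_eq : w = FreeMonoid.ofList a * FreeMonoid.ofList b * FreeMonoid.ofList c := hw_eq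
  refine ⟨twoTapeHom A (FreeMonoid.ofList a), twoTapeHom A (FreeMonoid.ofList b),
    twoTapeHom A (FreeMonoid.ofList c), by rw [hw_eq, map_mul, map_mul], ?_, ?_, fun k => ?_⟩
  · rw [add_add_add_comm, length_fst_add_length_snd_twoTapeHom,
      length_fst_add_length_snd_twoTapeHom]
    exact hlen_ab
  · intro h1
    have := length_fst_add_length_snd_twoTapeHom (FreeMonoid.ofList b)
    rw [h1] at this
    exact hb (List.length_eq_zero_iff.1 this.symm)
  · refine ⟨FreeMonoid.ofList a * FreeMonoid.ofList b ^ k * FreeMonoid.ofList c,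
      hpump ?_, by rw [map_mul, map_mul, map_pow]⟩
    exact ⟨_, ⟨a, rfl, _, FreeMonoid.toList_ofList_pow_mem_kstar b k, rfl⟩, c, rfl, rfl⟩

namespace FreeComm2

theorem val_mul (x y : FreeComm2) : (x * y).val = x.val + y.val := rfl

theorem mul_ne_of_fst_add_snd_eq_one {x : FreeComm2} (hx : x.val.1 + x.val.2 = 1)
    (y z : FreeComm2) : y * z ≠ x := by
  intro h
  have hy := y.property
  have hz := z.property
  rw [← h, val_mul] at hx
  simp only [ne_eq, Prod.ext_iff, not_and_or] at hy hz
  simp only [Prod.fst_add, Prod.snd_add] at hx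
  omega

def weight (f : A → FreeComm2) (w : FreeMonoid A) : ℕ × ℕ :=
  (w.toList.map fun a => (f a).val).sum

variable {f : A → FreeComm2}

theorem weight_mul (u v : FreeMonoid A) : weight f (u * v) = weight f u + weight f v := by
  simp [weight, FreeMonoid.toList_mul]

theorem weight_ofList_replicate (n : ℕ) (a : A) :
    weight f (FreeMonoid.ofList (List.replicate n a)) = n • (f a).val := by
  simp [weight, List.map_replicate, List.sum_replicate]

theorem val_lift (s : FreeSemigroup A) :
    (FreeSemigroup.lift f s).val = weight f (freeSemigroupToWord s) := by
  induction s using FreeSemigroup.recOnMul with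
  | ih1 a => simp [weight, freeSemigroupToWord]
  | ih2 a s ha hs => rw [map_mul, map_mul, val_mul, weight_mul, ha, hs]

theorem mem_wordProblem_iff {p : FreeMonoid A × FreeMonoid A} :
    p ∈ wordProblem f ↔ p.1 ≠ 1 ∧ p.2 ≠ 1 ∧ weight f p.1 = weight f p.2 := by
  constructor
  · rintro ⟨s, t, hst, rfl⟩
    exact ⟨mem_range_freeSemigroupToWord.1 ⟨s, rfl⟩, mem_range_freeSemigroupToWord.1 ⟨t, rfl⟩,
      by rw [← val_lift, ← val_lift, hst]⟩
  · rintro ⟨h₁, h₂, hweight⟩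
    obtain ⟨s, hs⟩ := mem_range_freeSemigroupToWord.2 h₁
    obtain ⟨t, ht⟩ := mem_range_freeSemigroupToWord.2 h₂
    exact ⟨s, t, Subtype.ext (by rw [val_lift, val_lift, hs, ht, hweight]), by rw [hs, ht]⟩

theorem weight_fst_eq_weight_snd_of_pump {x y z : FreeMonoid A × FreeMonoid A}
    (h₁ : x * y * z ∈ wordProblem f) (h₂ : x * y ^ 2 * z ∈ wordProblem f) :
    weight f y.1 = weight f y.2 := by
  have e₁ := (mem_wordProblem_iff.1 h₁).2.2
  have e₂ := (mem_wordProblem_iff.1 h₂).2.2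
  simp only [pow_two, Prod.fst_mul, Prod.snd_mul, weight_mul, Prod.ext_iff, Prod.fst_add,
    Prod.snd_add] at e₁ e₂ ⊢
  omega

end FreeComm2

open FreeComm2 in
/-- The free commutative semigroup on two generators does not have rational word
problem. -/
theorem freeComm2_not_hasRationalWordProblem : ¬ HasRationalWordProblem FreeComm2 := by
  rintro ⟨A, _, f, hf, hR⟩
  obtain ⟨a, ha⟩ := FreeSemigroup.exists_apply_eq_of_surjective_lift hf
    (mul_ne_of_fst_add_snd_eq_one (x := ⟨(1, 0), by simp⟩) rfl)
  obtain ⟨b, hb⟩ := FreeSemigroup.exists_apply_eq_of_surjective_lift hf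
    (mul_ne_of_fst_add_snd_eq_one (x := ⟨(0, 1), by simp⟩) rfl)
  obtain ⟨N, hN⟩ := hR.exists_pumping
  let aPow := FreeMonoid.ofList (List.replicate (N + 1) a)
  let bPow := FreeMonoid.ofList (List.replicate (N + 1) b)
  have hp : (aPow * bPow, bPow * aPow) ∈ wordProblem f := by
    refine mem_wordProblem_iff.2 ⟨?_, ?_, by simp only [weight_mul, aPow, bPow, add_comm]⟩ <;>
      simp [aPow, bPow, ← FreeMonoid.length_eq_zero]
  obtain ⟨x, y, z, hxyz, hlen, hy, hpump⟩ :=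
    hN _ hp (by simp [aPow, bPow, FreeMonoid.length_mul]; omega)
  have hy₁ : y.1 = FreeMonoid.ofList (List.replicate y.1.length a) :=
    FreeMonoid.eq_ofList_replicate_of_mul_mul_eq (congrArg Prod.fst hxyz).symm (by omega)
  have hy₂ : y.2 = FreeMonoid.ofList (List.replicate y.2.length b) :=
    FreeMonoid.eq_ofList_replicate_of_mul_mul_eq (congrArg Prod.snd hxyz).symm (by omega)
  have hweight := weight_fst_eq_weight_snd_of_pump (hxyz ▸ hp) (hpump 2)
  rw [hy₁, hy₂, weight_ofList_replicate, weight_ofList_replicate, ha, hb] at hweight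
  obtain ⟨hlen₁, hlen₂⟩ : y.1.length = 0 ∧ 0 = y.2.length := by
    simpa [Prod.ext_iff] using hweight
  exact hy (Prod.ext (FreeMonoid.length_eq_zero.1 hlen₁) (FreeMonoid.length_eq_zero.1 hlen₂.symm))
end
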